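/- arXiv:2509.07972 — 7 statements merged into one kernel-verified Lean document; each statement's English description precedes it below -/
import Mathlib

section
/- Let f : ℝ^d → ℝ be twice differentiable, bounded below with f* = inf_w f(w) > −∞, and (ρ, L₀, L_ρ)-smooth for some 0 ≤ ρ < 2 and L₀, L_ρ ≥ 0 (i.e. ‖∇²f(w)‖ ≤ L₀ + L_ρ‖∇f(w)‖^ρ for all w). Then for all w ∈ ℝ^d, ‖∇²f(w)‖ ≤ 2L₀ + L_ρ^{2/(2−ρ)} · 2^{ρ(ρ+2)/(2−ρ)} · (f(w) − f*)^{ρ/(2−ρ)}; in particular f is (α, K₀, K_α)-smooth with α = ρ/(2−ρ), K₀ = 2L₀ and K_α = L_ρ^{2/(2−ρ)} 2^{ρ(ρ+2)/(2−ρ)}. -/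
/-!
Fix `w` with `G = ‖∇f(w)‖` and let `L` bound the Hessian on the region `‖∇f‖ ≤ 2G`.
Walking from `w` along `-∇f(w)/G` for time `G/L`, the gradient moves by at most `L t`,
so it never leaves that region, and `f` decreases by at least `G²/(2L)`; since `f ≥ f*`,
this gives `G² ≤ 2L(f(w) - f*)`. With `L = L₀ + L_ρ (2G)^ρ` either `L₀` dominates,
or `G^{2-ρ} ≤ 2^{ρ+2} L_ρ (f(w) - f*)`, which raised to the power `ρ/(2-ρ)` bounds
`L_ρ G^ρ` by the claimed term.
-/

open Real

noncomputable section

open Set Filter Topology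

variable {E : Type*} [NormedAddCommGroup E] [NormedSpace ℝ E]

theorem norm_sub_le_mul_of_norm_deriv_le_of_norm_le {φ φ' : ℝ → E} {R L M T : ℝ}
    (hφ : ∀ t, HasDerivAt φ (φ' t) t) (hbound : ∀ t, ‖φ t‖ ≤ R → ‖φ' t‖ ≤ L)
    (hLM : L < M) (hM : 0 ≤ M) (hT : ‖φ 0‖ + M * T ≤ R) :
    ∀ t ∈ Icc 0 T, ‖φ t - φ 0‖ ≤ M * t := by
  refine image_norm_le_of_norm_deriv_right_lt_deriv_boundary' (f := fun t => φ t - φ 0)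
    (B' := fun _ => M) ?_ (fun t _ => ((hφ t).sub_const (φ 0)).hasDerivWithinAt) (by simp)
    (continuous_const.mul continuous_id).continuousOn
    (fun t _ => ((hasDerivAt_id t).const_mul M).hasDerivWithinAt.congr_deriv (mul_one M)) ?_
  · exact (continuous_iff_continuousAt.2 fun t => (hφ t).continuousAt).continuousOn.sub
      continuousOn_const
  · intro t ht hsphere
    have hφt : ‖φ t‖ ≤ R := calc
      ‖φ t‖ ≤ ‖φ 0‖ + ‖φ t - φ 0‖ := norm_le_norm_add_norm_sub' _ _
      _ = ‖φ 0‖ + M * t := by rw [hsphere]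
      _ ≤ R := by nlinarith [ht.2]
    exact (hbound t hφt).trans_lt hLM

theorem image_le_of_deriv_le_affine {h h' : ℝ → ℝ} {a b T : ℝ} (hh : ∀ t, HasDerivAt h (h' t) t)
    (hbound : ∀ t ∈ Ico 0 T, h' t ≤ -a + b * t) (hT : 0 ≤ T) :
    h T ≤ h 0 - a * T + b * T ^ 2 / 2 := by
  refine image_le_of_deriv_right_le_deriv_boundary (B := fun t => h 0 - a * t + b * t ^ 2 / 2)
    (continuous_iff_continuousAt.2 fun t => (hh t).continuousAt).continuousOn
    (fun t _ => (hh t).hasDerivWithinAt) (by simp) (by fun_prop) (fun t _ => ?_) hbound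
    (right_mem_Icc.2 hT)
  exact ((((hasDerivAt_id' t).const_mul a).const_sub (h 0)).add
    (((hasDerivAt_pow 2 t).const_mul b).div_const 2)).hasDerivWithinAt.congr_deriv (by ring)

variable {F : Type*} [NormedAddCommGroup F] [InnerProductSpace ℝ F] [CompleteSpace F]

theorem sq_norm_gradient_le_of_lt {f : F → ℝ} (hf : Differentiable ℝ f)
    (hf' : Differentiable ℝ (gradient f)) {fstar : ℝ} (hfstar : ∀ v, fstar ≤ f v) {w : F}
    {L M : ℝ} (hbound : ∀ v, ‖gradient f v‖ ≤ 2 * ‖gradient f w‖ → ‖fderiv ℝ (gradient f) v‖ ≤ L)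
    (hLM : L < M) :
    ‖gradient f w‖ ^ 2 ≤ 2 * M * (f w - fstar) := by
  set G := ‖gradient f w‖
  have hM : 0 < M :=
    ((norm_nonneg _).trans (hbound w (by linarith [norm_nonneg (gradient f w)]))).trans_lt hLM
  -- `u` is the unit vector `-∇f(w)/G`, or `0` when `G = 0`
  set u : F := (-G⁻¹) • gradient f w
  have hu : ‖u‖ ≤ 1 := by
    rw [norm_smul, norm_neg, norm_inv, norm_norm]
    exact inv_mul_le_one
  have hinner : inner ℝ (gradient f w) u = -G := by
    rw [real_inner_smul_right, real_inner_self_eq_norm_sq, sq, neg_mul, ← mul_assoc,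
      inv_mul_mul_self]
  set γ : ℝ → F := fun t => w + t • u
  have hγ : ∀ t, HasDerivAt γ u t := fun t => by
    simpa only [one_smul] using ((hasDerivAt_id' t).smul_const u).const_add w
  set T := G / M
  have hlip : ∀ t ∈ Icc 0 T, ‖gradient f (γ t) - gradient f w‖ ≤ M * t := by
    have := norm_sub_le_mul_of_norm_deriv_le_of_norm_le (R := 2 * G) (T := T)
      (fun t => (hf' (γ t)).hasFDerivAt.comp_hasDerivAt t (hγ t)) (fun t ht => ?_) hLM hM.le ?_
    · simpa [γ] using this
    · exact ((fderiv ℝ (gradient f) (γ t)).le_opNorm u).trans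
        (mul_le_of_le_one_right (norm_nonneg _) hu) |>.trans (hbound _ (by simpa [γ] using ht))
    · simp only [Function.comp_apply, γ, zero_smul, add_zero, T, mul_div_cancel₀ _ hM.ne']
      linarith
  have hslope : ∀ t ∈ Ico 0 T, inner ℝ (gradient f (γ t)) u ≤ -G + M * t := fun t ht => calc
    inner ℝ (gradient f (γ t)) u
        = inner ℝ (gradient f w) u + inner ℝ (gradient f (γ t) - gradient f w) u := by
          rw [← inner_add_left, add_sub_cancel]
    _ ≤ -G + ‖gradient f (γ t) - gradient f w‖ := by
          rw [hinner]
          gcongr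
          exact (real_inner_le_norm _ _).trans (mul_le_of_le_one_right (norm_nonneg _) hu)
    _ ≤ -G + M * t := by gcongr; exact hlip t (Ico_subset_Icc_self ht)
  have hdescent : f (γ T) ≤ f w - G * T + M * T ^ 2 / 2 := by
    refine image_le_of_deriv_le_affine (h := fun t => f (γ t)) (fun t => ?_) hslope
      (by positivity) |>.trans_eq (by simp [γ])
    rw [inner_gradient_left]
    exact (hf _).hasFDerivAt.comp_hasDerivAt t (hγ t)
  have : G ^ 2 / (2 * M) ≤ f w - fstar := by
    have := (hfstar (γ T)).trans hdescent
    simp only [T] at this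
    field_simp at this ⊢
    linarith
  rwa [div_le_iff₀ (by positivity), mul_comm] at this

theorem sq_norm_gradient_le {f : F → ℝ} (hf : Differentiable ℝ f)
    (hf' : Differentiable ℝ (gradient f)) {fstar : ℝ} (hfstar : ∀ v, fstar ≤ f v) {w : F}
    {L : ℝ} (hbound : ∀ v, ‖gradient f v‖ ≤ 2 * ‖gradient f w‖ → ‖fderiv ℝ (gradient f) v‖ ≤ L) :
    ‖gradient f w‖ ^ 2 ≤ 2 * L * (f w - fstar) := by
  -- the fencing argument behind `sq_norm_gradient_le_of_lt` needs a strict bound; let `M ↓ L`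
  have hlim : Tendsto (fun M => 2 * M * (f w - fstar)) (𝓝[>] L) (𝓝 (2 * L * (f w - fstar))) :=
    ((continuous_mul_const _).comp (continuous_const_mul 2)).tendsto L |>.mono_left
      nhdsWithin_le_nhds
  exact ge_of_tendsto hlim (eventually_nhdsWithin_of_forall fun _ hLM =>
    sq_norm_gradient_le_of_lt hf hf' hfstar hbound hLM)

theorem ContDiff.differentiable_gradient {f : F → ℝ} (hf : ContDiff ℝ 2 f) :
    Differentiable ℝ (gradient f) :=
  (InnerProductSpace.toDual ℝ F).symm.toContinuousLinearEquiv.differentiable.comp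
    ((hf.fderiv_right (m := 1) (by norm_num)).differentiable (by norm_num))

theorem rpow_le_of_sq_le_mul_rpow {G c ρ : ℝ} (hG : 0 ≤ G) (hρ0 : 0 ≤ ρ) (hρ2 : ρ < 2)
    (hc : 0 ≤ c) (h : G ^ 2 ≤ c * G ^ ρ) : G ^ ρ ≤ c ^ (ρ / (2 - ρ)) := by
  have h2ρ : 0 < 2 - ρ := by linarith
  have hGc : G ^ (2 - ρ) ≤ c := by
    rcases hG.eq_or_lt with rfl | hG
    · rwa [zero_rpow h2ρ.ne']
    · rwa [rpow_sub hG, rpow_two, div_le_iff₀ (rpow_pos_of_pos hG ρ)]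
  calc G ^ ρ = (G ^ (2 - ρ)) ^ (ρ / (2 - ρ)) := by
        rw [← rpow_mul hG, mul_div_cancel₀ _ h2ρ.ne']
    _ ≤ c ^ (ρ / (2 - ρ)) := by gcongr

theorem add_mul_rpow_le_of_sq_le {G Δ ρ L0 Lρ : ℝ} (hG : 0 ≤ G) (hΔ : 0 ≤ Δ) (hρ0 : 0 ≤ ρ)
    (hρ2 : ρ < 2) (hL0 : 0 ≤ L0) (hLρ : 0 ≤ Lρ)
    (h : G ^ 2 ≤ 2 * (L0 + Lρ * (2 * G) ^ ρ) * Δ) :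
    L0 + Lρ * G ^ ρ ≤
      2 * L0 + Lρ ^ (2 / (2 - ρ)) * 2 ^ (ρ * (ρ + 2) / (2 - ρ)) * Δ ^ (ρ / (2 - ρ)) := by
  have h2ρ : 0 < 2 - ρ := by linarith
  have hK : 0 ≤ Lρ ^ (2 / (2 - ρ)) * 2 ^ (ρ * (ρ + 2) / (2 - ρ)) * Δ ^ (ρ / (2 - ρ)) := by
    positivity
  rcases le_total (Lρ * (2 * G) ^ ρ) L0 with hsmall | hlarge
  · have : Lρ * G ^ ρ ≤ Lρ * (2 * G) ^ ρ := by gcongr; linarith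
    linarith
  · have hsq : G ^ 2 ≤ (2 ^ (ρ + 2) * Lρ * Δ) * G ^ ρ := calc
        G ^ 2 ≤ 2 * (L0 + Lρ * (2 * G) ^ ρ) * Δ := h
        _ ≤ 2 * (2 * (Lρ * (2 * G) ^ ρ)) * Δ := by gcongr; linarith
        _ = (2 ^ (ρ + 2) * Lρ * Δ) * G ^ ρ := by
          rw [mul_rpow zero_le_two hG, rpow_add two_pos, rpow_two]; ring
    have hexpL : 2 / (2 - ρ) = 1 + ρ / (2 - ρ) := by field_simp; ring
    have hexp2 : ρ * (ρ + 2) / (2 - ρ) = (ρ + 2) * (ρ / (2 - ρ)) := by ring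
    calc L0 + Lρ * G ^ ρ ≤ L0 + Lρ * (2 ^ (ρ + 2) * Lρ * Δ) ^ (ρ / (2 - ρ)) := by
          gcongr; exact rpow_le_of_sq_le_mul_rpow hG hρ0 hρ2 (by positivity) hsq
      _ = L0 + Lρ ^ (2 / (2 - ρ)) * 2 ^ (ρ * (ρ + 2) / (2 - ρ)) * Δ ^ (ρ / (2 - ρ)) := by
          rw [mul_rpow (by positivity) hΔ, mul_rpow (by positivity) hLρ, ← rpow_mul zero_le_two,
            hexpL, hexp2, rpow_add' hLρ (by positivity), rpow_one]
          ring
      _ ≤ _ := by linarith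

/-- If `f` is twice differentiable, bounded below with infimum `fstar`,
and `(ρ, L₀, L_ρ)`-smooth with `0 ≤ ρ < 2`, then
`‖∇²f(w)‖ ≤ 2L₀ + L_ρ^{2/(2−ρ)} 2^{ρ(ρ+2)/(2−ρ)} (f(w) − f*)^{ρ/(2−ρ)}` for all `w`;
in particular `f` is `(ρ/(2−ρ), 2L₀, L_ρ^{2/(2−ρ)} 2^{ρ(ρ+2)/(2−ρ)})`-smooth. -/
theorem statement0 (d : ℕ) (f : EuclideanSpace ℝ (Fin d) → ℝ)
    (hf : ContDiff ℝ 2 f)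
    (fstar : ℝ) (hglb : IsGLB (Set.range f) fstar)
    (ρ L0 Lρ : ℝ) (hρ0 : 0 ≤ ρ) (hρ2 : ρ < 2) (hL0 : 0 ≤ L0) (hLρ : 0 ≤ Lρ)
    (hsmooth : ∀ w, ‖fderiv ℝ (gradient f) w‖ ≤ L0 + Lρ * ‖gradient f w‖ ^ ρ) :
    ∀ w, ‖fderiv ℝ (gradient f) w‖ ≤
      2 * L0 + Lρ ^ (2 / (2 - ρ)) * 2 ^ (ρ * (ρ + 2) / (2 - ρ)) * (f w - fstar) ^ (ρ / (2 - ρ)) := by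
  intro w
  have hfstar : ∀ v, fstar ≤ f v := fun v => hglb.1 ⟨v, rfl⟩
  have hkey := sq_norm_gradient_le (hf.differentiable (by norm_num)) hf.differentiable_gradient
    hfstar (L := L0 + Lρ * (2 * ‖gradient f w‖) ^ ρ) fun v hv => (hsmooth v).trans (by gcongr)
  calc ‖fderiv ℝ (gradient f) w‖ ≤ L0 + Lρ * ‖gradient f w‖ ^ ρ := hsmooth w
    _ ≤ _ := add_mul_rpow_le_of_sq_le (norm_nonneg _) (sub_nonneg.2 (hfstar w)) hρ0 hρ2 hL0 hLρ hkey
end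
end

section
/- Define f : ℝ → ℝ by f(x) = 2x + x·sin(x) for x ≥ 0 and f(x) = 2(e^x − 1) for x < 0. Then f is twice differentiable, bounded below with f* = inf f > −∞, and there exist constants K₀, K₁ ≥ 0 such that |f''(x)| ≤ K₀ + K₁(f(x) − f*) for all x ∈ ℝ (f is (1, K₀, K₁)-smooth); however, for every ρ > 0 and all constants L₀, L_ρ ≥ 0, f is not (ρ, L₀, L_ρ)-smooth, i.e. there exists x ∈ ℝ with |f''(x)| > L₀ + L_ρ|f'(x)|^ρ. -/
/-!
For `x ≥ 0` the second derivative `2 cos x - x sin x` grows at most like `x ≤ f x`, and for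
`x < 0` it equals `f x + 2`, so `|f''| ≤ f - f*` with `f* = -2`, approached as `x → -∞`.
At the points `x = 2πn - π/2` we have `sin x = -1`, `cos x = 0`, hence `f' x = 1` while
`f'' x = x` is unbounded, which no bound of the form `L₀ + L_ρ |f'|^ρ` can control.
-/

open Real Set Filter Topology

theorem hasDerivAt_ite_le {E : Type*} [NormedAddCommGroup E] [NormedSpace ℝ E]
    {g h g' h' : ℝ → E} {a : ℝ} (hg : ∀ x, HasDerivAt g (g' x) x)
    (hh : ∀ x, HasDerivAt h (h' x) x) (hval : g a = h a) (hder : g' a = h' a) (x : ℝ) :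
    HasDerivAt (fun y => if a ≤ y then g y else h y) (if a ≤ x then g' x else h' x) x := by
  rcases lt_trichotomy x a with hx | rfl | hx
  · rw [if_neg hx.not_ge]
    refine (hh x).congr_of_eventuallyEq ?_
    filter_upwards [Iio_mem_nhds hx] with y hy
    exact if_neg (not_le.mpr hy)
  · rw [if_pos le_rfl]
    have hright : HasDerivWithinAt (fun y => if x ≤ y then g y else h y) (g' x) (Ici x) x :=
      (hg x).hasDerivWithinAt.congr_of_mem (fun y hy => if_pos hy) self_mem_Ici
    have hleft : HasDerivWithinAt (fun y => if x ≤ y then g y else h y) (g' x) (Iic x) x := by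
      rw [hder]
      refine (hh x).hasDerivWithinAt.congr (fun y hy => ?_) (by rw [if_pos le_rfl, hval])
      split_ifs with hxy
      · rw [le_antisymm hy hxy, hval]
      · rfl
    have := hleft.union hright
    rwa [Iic_union_Ici, hasDerivWithinAt_univ] at this
  · rw [if_pos hx.le]
    refine (hg x).congr_of_eventuallyEq ?_
    filter_upwards [Ioi_mem_nhds hx] with y hy
    exact if_pos (le_of_lt hy)

theorem exists_gt_sin_eq_neg_one (M : ℝ) : ∃ x, M < x ∧ sin x = -1 := by
  obtain ⟨n, hn⟩ := exists_nat_gt ((M + π / 2) / (2 * π))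
  refine ⟨-(π / 2) + n * (2 * π), ?_, sin_eq_neg_one_iff.mpr ⟨n, by push_cast; ring⟩⟩
  rw [div_lt_iff₀ (by positivity)] at hn
  linarith

namespace PiecewiseSinExp

noncomputable def F (x : ℝ) : ℝ := if 0 ≤ x then 2 * x + x * sin x else 2 * (exp x - 1)

noncomputable def F' (x : ℝ) : ℝ := if 0 ≤ x then 2 + sin x + x * cos x else 2 * exp x

noncomputable def F'' (x : ℝ) : ℝ := if 0 ≤ x then 2 * cos x - x * sin x else 2 * exp x

theorem hasDerivAt_F (x : ℝ) : HasDerivAt F (F' x) x := by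
  refine hasDerivAt_ite_le (a := 0) (g' := fun y => 2 + sin y + y * cos y)
    (h' := fun y => 2 * exp y) (fun y => ?_) (fun y => ?_) (by simp) (by simp) x
  · have := ((hasDerivAt_id y).const_mul 2).fun_add ((hasDerivAt_id y).fun_mul (hasDerivAt_sin y))
    simpa only [id, mul_one, one_mul, add_assoc] using this
  · simpa using ((hasDerivAt_exp y).sub_const 1).const_mul 2

theorem hasDerivAt_F' (x : ℝ) : HasDerivAt F' (F'' x) x := by
  refine hasDerivAt_ite_le (a := 0) (g' := fun y => 2 * cos y - y * sin y)
    (h' := fun y => 2 * exp y) (fun y => ?_) (fun y => (hasDerivAt_exp y).const_mul 2)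
    (by simp) (by norm_num) x
  have := ((hasDerivAt_sin y).const_add 2).fun_add ((hasDerivAt_id y).fun_mul (hasDerivAt_cos y))
  exact this.congr_deriv (by simp only [id, one_mul]; ring)

theorem deriv_F : deriv F = F' := funext fun x => (hasDerivAt_F x).deriv

theorem deriv_F' : deriv F' = F'' := funext fun x => (hasDerivAt_F' x).deriv

theorem differentiable_F : Differentiable ℝ F := fun x => (hasDerivAt_F x).differentiableAt

theorem differentiable_F' : Differentiable ℝ F' := fun x => (hasDerivAt_F' x).differentiableAt

theorem neg_two_le_F (x : ℝ) : -2 ≤ F x := by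
  unfold F
  split_ifs with hx
  · nlinarith [neg_one_le_sin x]
  · linarith [exp_pos x]

theorem tendsto_F_atBot : Tendsto F atBot (𝓝 (-2)) := by
  have hexp : Tendsto (fun x => 2 * (exp x - 1)) atBot (𝓝 (-2)) := by
    simpa using (tendsto_exp_atBot.sub_const 1).const_mul 2
  refine hexp.congr' ?_
  filter_upwards [eventually_lt_atBot 0] with x hx
  exact (if_neg (not_le.mpr hx)).symm

theorem isGLB_range_F : IsGLB (range F) (-2) :=
  ⟨forall_mem_range.mpr neg_two_le_F, fun _ hb =>
    ge_of_tendsto tendsto_F_atBot (Eventually.of_forall fun x => hb (mem_range_self x))⟩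

theorem abs_F''_le (x : ℝ) : |F'' x| ≤ F x + 2 := by
  unfold F F''
  split_ifs with hx
  · have hcos : |2 * cos x| ≤ 2 := by
      rw [abs_mul, abs_two]; linarith [abs_cos_le_one x]
    have hsin : |x * sin x| ≤ x := by
      rw [abs_mul, abs_of_nonneg hx]; nlinarith [abs_sin_le_one x]
    calc |2 * cos x - x * sin x| ≤ |2 * cos x| + |x * sin x| := abs_sub _ _
      _ ≤ 2 + x := add_le_add hcos hsin
      _ ≤ 2 * x + x * sin x + 2 := by nlinarith [neg_one_le_sin x]
  · rw [abs_of_pos (by positivity)]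
    linarith

theorem F'_eq_one_and_F''_eq_self {x : ℝ} (hx : 0 ≤ x) (hsin : sin x = -1) :
    F' x = 1 ∧ F'' x = x := by
  have hcos : cos x = 0 := by nlinarith [sin_sq_add_cos_sq x]
  simp only [F', F'', if_pos hx, hsin, hcos]
  constructor <;> ring

end PiecewiseSinExp

open PiecewiseSinExp

/-- The function `f(x) = 2x + x sin x` for `x ≥ 0`, `f(x) = 2(eˣ − 1)` for
`x < 0` is twice differentiable, bounded below, `(1, K₀, K₁)`-smooth for some `K₀, K₁ ≥ 0`,
but not `(ρ, L₀, L_ρ)`-smooth for any `ρ > 0` and `L₀, L_ρ ≥ 0`. -/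
theorem statement1
    (f : ℝ → ℝ)
    (hfdef : ∀ x : ℝ, f x = if 0 ≤ x then 2 * x + x * Real.sin x else 2 * (Real.exp x - 1)) :
    (Differentiable ℝ f ∧ Differentiable ℝ (deriv f)) ∧
    (∃ fstar : ℝ, IsGLB (Set.range f) fstar ∧
      (∃ K0 K1 : ℝ, 0 ≤ K0 ∧ 0 ≤ K1 ∧
        ∀ x : ℝ, |deriv (deriv f) x| ≤ K0 + K1 * (f x - fstar))) ∧
    (∀ ρ : ℝ, 0 < ρ → ∀ L0 Lρ : ℝ, 0 ≤ L0 → 0 ≤ Lρ →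
      ∃ x : ℝ, L0 + Lρ * |deriv f x| ^ ρ < |deriv (deriv f) x|) := by
  obtain rfl : f = F := funext hfdef
  rw [deriv_F, deriv_F']
  refine ⟨⟨differentiable_F, differentiable_F'⟩,
    ⟨-2, isGLB_range_F, 0, 1, le_rfl, zero_le_one, fun x => ?_⟩, fun ρ _ L0 Lρ hL0 hLρ => ?_⟩
  · linarith [abs_F''_le x]
  · obtain ⟨x, hx, hsin⟩ := exists_gt_sin_eq_neg_one (L0 + Lρ)
    obtain ⟨hF', hF''⟩ := F'_eq_one_and_F''_eq_self (by linarith) hsin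
    refine ⟨x, ?_⟩
    rw [hF', hF'', abs_one, one_rpow, mul_one, abs_of_nonneg (by linarith)]
    exact hx
end

section
/- Let f : ℝ^d → ℝ be (ρ, K₀, K_ρ)-smooth with f* = inf f > −∞. Then for every x ∈ ℝ^d, writing Δ = f(x) − f*, the gradient satisfies ‖∇f(x)‖ ≤ 2√(K₀Δ + K_ρ·3^ρ·Δ^{ρ+1}). -/
/-!
Move from `x` along the unit direction `u` of steepest descent and let `φ(t) = f(x + t u)`, so
`φ'(0) = -‖∇f(x)‖`. As long as the path stays in the sublevel set `{f - f* ≤ 3Δ}`, the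
smoothness condition bounds `φ''` by `L = K₀ + K_ρ 3^ρ Δ^ρ`, and Taylor's bound
`φ(t) ≤ φ(0) - ‖∇f(x)‖ t + L t² / 2` shows that for `L t² ≤ 2Δ` the path never leaves
`{f - f* ≤ 2Δ}`; a first-exit-time argument makes this rigorous. Since `φ ≥ f*`, evaluating at
`t = 2Δ / ‖∇f(x)‖` forces `‖∇f(x)‖² ≤ 2LΔ`.
-/

open Real Set

theorem image_le_quadratic_of_second_deriv_le {φ φ' φ'' : ℝ → ℝ} {a b M : ℝ}
    (hφ : ∀ t, HasDerivAt φ (φ' t) t) (hφ' : ∀ t, HasDerivAt φ' (φ'' t) t)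
    (hM : ∀ t ∈ Ico a b, φ'' t ≤ M) :
    ∀ t ∈ Icc a b, φ t ≤ φ a + φ' a * (t - a) + M * (t - a) ^ 2 / 2 := by
  have hlin : ∀ t, HasDerivAt (fun t => t - a) 1 t := fun t => (hasDerivAt_id' t).sub_const a
  have hslope : ∀ t ∈ Icc a b, φ' t ≤ φ' a + M * (t - a) :=
    image_le_of_deriv_right_le_deriv_boundary
      (fun t _ => (hφ' t).continuousAt.continuousWithinAt)
      (fun t _ => (hφ' t).hasDerivWithinAt) (by simp) (by fun_prop)
      (fun t _ => ((hlin t).const_mul M).const_add (φ' a) |>.hasDerivWithinAt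
        |>.congr_deriv (mul_one M)) hM
  have hquad : ∀ t, HasDerivAt (fun t => φ a + φ' a * (t - a) + M * (t - a) ^ 2 / 2)
      (φ' a + M * (t - a)) t := fun t =>
    (((hlin t).const_mul (φ' a)).const_add (φ a)).add
      (((hlin t).pow 2).const_mul M |>.div_const 2)
      |>.congr_deriv (by ring)
  exact image_le_of_deriv_right_le_deriv_boundary
    (fun t _ => (hφ t).continuousAt.continuousWithinAt)
    (fun t _ => (hφ t).hasDerivWithinAt) (by simp) (by fun_prop)
    (fun t _ => (hquad t).hasDerivWithinAt)
    (fun t ht => hslope t (Ico_subset_Icc_self ht))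

theorem sq_deriv_le_of_second_deriv_le_on_sublevel {φ φ' φ'' : ℝ → ℝ} {Δ M : ℝ}
    (hφ : ∀ t, HasDerivAt φ (φ' t) t) (hφ' : ∀ t, HasDerivAt φ' (φ'' t) t)
    (hdesc : φ' 0 ≤ 0) (hM : 0 ≤ M) (hΔ : 0 ≤ Δ) (hlb : ∀ t, φ 0 - Δ ≤ φ t)
    (hbd : ∀ t, φ t < φ 0 + 2 * Δ → φ'' t ≤ M) :
    φ' 0 ^ 2 ≤ 2 * M * Δ := by
  rcases hΔ.eq_or_lt with rfl | hΔ
  · have hmin : IsLocalMin φ 0 := Filter.Eventually.of_forall fun t => by simpa using hlb t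
    simp [hmin.hasDerivAt_eq_zero (hφ 0)]
  have hcont : Continuous φ := continuous_iff_continuousAt.2 fun t => (hφ t).continuousAt
  have taylor : ∀ c ≥ 0, (∀ s ∈ Ico 0 c, φ s < φ 0 + 2 * Δ) →
      φ c ≤ φ 0 + φ' 0 * c + M * c ^ 2 / 2 := fun c hc hin => by
    simpa using image_le_quadratic_of_second_deriv_le hφ hφ'
      (fun s hs => hbd s (hin s hs)) c ⟨hc, le_rfl⟩
  -- Before the first exit from the sublevel set, the Taylor bound keeps `φ` below `φ 0 + Δ`.
  have stays : ∀ b ≥ 0, M * b ^ 2 ≤ 2 * Δ → ∀ t ∈ Icc 0 b, φ t < φ 0 + 2 * Δ := by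
    intro b hb hMb
    by_contra! hexit
    obtain ⟨τ, ⟨hτ, hτexit : φ 0 + 2 * Δ ≤ φ τ⟩, hfirst⟩ :=
      (isCompact_Icc.inter_right (isClosed_le continuous_const hcont)).exists_isLeast hexit
    have hbefore : ∀ s ∈ Ico 0 τ, φ s < φ 0 + 2 * Δ := fun s hs =>
      lt_of_not_ge fun hs' => (hfirst ⟨⟨hs.1, hs.2.le.trans hτ.2⟩, hs'⟩).not_gt hs.2
    have hτtaylor := taylor τ hτ.1 hbefore
    have hMτ : M * τ ^ 2 ≤ M * b ^ 2 := by gcongr; exacts [hτ.1, hτ.2]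
    nlinarith [mul_nonpos_of_nonneg_of_nonpos hτ.1 hdesc]
  by_contra! hlt
  set G := -φ' 0
  have hGpos : 0 < G := by nlinarith
  have hMb : M * (2 * Δ / G) ^ 2 < 2 * Δ := by
    rw [div_pow, mul_div_assoc', div_lt_iff₀ (by positivity)]
    nlinarith
  have hend := taylor (2 * Δ / G) (by positivity)
    fun s hs => stays _ (by positivity) hMb.le s ⟨hs.1, hs.2.le⟩
  have hGb : φ' 0 * (2 * Δ / G) = -(2 * Δ) := by field_simp; linarith
  linarith [hlb (2 * Δ / G)]

theorem sq_norm_gradient_le_of_norm_fderiv_gradient_le {E : Type*} [NormedAddCommGroup E]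
    [InnerProductSpace ℝ E] [CompleteSpace E] {f : E → ℝ} (hf : ContDiff ℝ 2 f) {m M : ℝ}
    (hlb : ∀ w, m ≤ f w) {x : E}
    (hbd : ∀ w, f w - m ≤ 3 * (f x - m) → ‖fderiv ℝ (gradient f) w‖ ≤ M) :
    ‖gradient f x‖ ^ 2 ≤ 2 * M * (f x - m) := by
  have hΔ : 0 ≤ f x - m := sub_nonneg.2 (hlb x)
  have hgrad : Differentiable ℝ (gradient f) :=
    ((InnerProductSpace.toDual ℝ E).symm.contDiff.comp (hf.fderiv_right le_rfl)).differentiable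
      one_ne_zero
  set G := ‖gradient f x‖
  -- If `G = 0` then `u = 0` (as `0⁻¹ = 0`), and `hslope` below still holds.
  set u : E := -(G⁻¹ • gradient f x)
  have hu : ‖u‖ ≤ 1 := by
    rw [norm_neg, norm_smul, norm_inv, norm_norm]
    exact inv_mul_le_one_of_le₀ le_rfl (norm_nonneg _)
  have hline : ∀ t : ℝ, HasDerivAt (fun t : ℝ => x + t • u) u t := fun t => by
    simpa using ((hasDerivAt_id t).smul_const u).const_add x
  have hφ : ∀ t : ℝ, HasDerivAt (fun t => f (x + t • u))
      (inner ℝ (gradient f (x + t • u)) u) t := fun t => by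
    rw [inner_gradient_left]
    exact (hf.differentiable (by norm_num) _).hasFDerivAt.comp_hasDerivAt t (hline t)
  have hφ' : ∀ t : ℝ, HasDerivAt (fun t => inner ℝ (gradient f (x + t • u)) u)
      (inner ℝ (fderiv ℝ (gradient f) (x + t • u) u) u) t := fun t => by
    simpa using ((hgrad _).hasFDerivAt.comp_hasDerivAt t (hline t)).inner ℝ (hasDerivAt_const t u)
  have hslope : inner ℝ (gradient f (x + (0 : ℝ) • u)) u = -G := by
    rw [zero_smul, add_zero, inner_neg_right, real_inner_smul_right, real_inner_self_eq_norm_sq,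
      sq, ← mul_assoc, inv_mul_mul_self]
  have hM : 0 ≤ M := (norm_nonneg _).trans (hbd x (by linarith))
  have hcurv : ∀ t : ℝ, f (x + t • u) < f (x + (0 : ℝ) • u) + 2 * (f x - m) →
      inner ℝ (fderiv ℝ (gradient f) (x + t • u) u) u ≤ M := fun t ht => by
    have hH := hbd (x + t • u) (by rw [zero_smul, add_zero] at ht; linarith)
    calc inner ℝ (fderiv ℝ (gradient f) (x + t • u) u) u
        ≤ ‖fderiv ℝ (gradient f) (x + t • u)‖ * ‖u‖ * ‖u‖ :=
          (real_inner_le_norm _ _).trans (by gcongr; exact ContinuousLinearMap.le_opNorm _ _)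
      _ ≤ M * 1 * 1 := by gcongr
      _ = M := by ring
  have hdesc : inner ℝ (gradient f (x + (0 : ℝ) • u)) u ≤ 0 := by
    rw [hslope]
    exact neg_nonpos.2 (norm_nonneg _)
  have h1d := sq_deriv_le_of_second_deriv_le_on_sublevel hφ hφ' hdesc hM hΔ
    (fun t => by simpa using hlb _) hcurv
  rwa [hslope, neg_sq] at h1d

theorem statement3_general (d : ℕ) (f : EuclideanSpace ℝ (Fin d) → ℝ)
    (hf : ContDiff ℝ 2 f)
    (ρ K0 Kρ : ℝ) (hρ : 0 < ρ) (hKρ : 0 ≤ Kρ)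
    (fstar : ℝ) (hglb : IsGLB (Set.range f) fstar)
    (hsmooth : ∀ w, ‖fderiv ℝ (gradient f) w‖ ≤ K0 + Kρ * (f w - fstar) ^ ρ)
    (x : EuclideanSpace ℝ (Fin d)) :
    ‖gradient f x‖ ≤
      2 * Real.sqrt (K0 * (f x - fstar) + Kρ * 3 ^ ρ * (f x - fstar) ^ (ρ + 1)) := by
  have hlb : ∀ w, fstar ≤ f w := fun w => hglb.1 ⟨w, rfl⟩
  have hΔ : 0 ≤ f x - fstar := sub_nonneg.2 (hlb x)
  have hhess : ∀ w, f w - fstar ≤ 3 * (f x - fstar) →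
      ‖fderiv ℝ (gradient f) w‖ ≤ K0 + Kρ * 3 ^ ρ * (f x - fstar) ^ ρ := fun w hw => by
    refine (hsmooth w).trans ?_
    rw [mul_assoc, ← mul_rpow zero_le_three hΔ]
    gcongr
    exact sub_nonneg.2 (hlb w)
  have hsq := sq_norm_gradient_le_of_norm_fderiv_gradient_le hf hlb hhess
  have hrhs : K0 * (f x - fstar) + Kρ * 3 ^ ρ * (f x - fstar) ^ (ρ + 1) =
      (K0 + Kρ * 3 ^ ρ * (f x - fstar) ^ ρ) * (f x - fstar) := by
    rw [rpow_add_one' hΔ (by linarith)]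
    ring
  have hnonneg : 0 ≤ (K0 + Kρ * 3 ^ ρ * (f x - fstar) ^ ρ) * (f x - fstar) := by
    nlinarith [sq_nonneg ‖gradient f x‖]
  refine le_of_pow_le_pow_left₀ two_ne_zero (by positivity) ?_
  rw [hrhs, mul_pow, sq_sqrt hnonneg]
  linarith

/-- Bounded gradient. If `f` is `(ρ, K₀, K_ρ)`-smooth with
`f* = inf f > −∞`, then for every `x`, with `Δ = f(x) − f*`,
`‖∇f(x)‖ ≤ 2√(K₀Δ + K_ρ 3^ρ Δ^{ρ+1})`. -/
theorem statement3 (d : ℕ) (f : EuclideanSpace ℝ (Fin d) → ℝ)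
    (hf : ContDiff ℝ 2 f)
    (ρ K0 Kρ : ℝ) (hρ : 0 < ρ) (hK0 : 0 ≤ K0) (hKρ : 0 ≤ Kρ)
    (fstar : ℝ) (hglb : IsGLB (Set.range f) fstar)
    (hsmooth : ∀ w, ‖fderiv ℝ (gradient f) w‖ ≤ K0 + Kρ * (f w - fstar) ^ ρ)
    (x : EuclideanSpace ℝ (Fin d)) :
    ‖gradient f x‖ ≤
      2 * Real.sqrt (K0 * (f x - fstar) + Kρ * 3 ^ ρ * (f x - fstar) ^ (ρ + 1)) :=
  statement3_general d f hf ρ K0 Kρ hρ hKρ fstar hglb hsmooth x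
end

section
/- Let f : ℝ^d → ℝ be (ρ, K₀, K_ρ)-smooth with K₀, K_ρ > 0 and f* = inf f > −∞, and let w₀ ∈ ℝ^d with Δ₀ = f(w₀) − f* < ∞. Consider gradient descent with the increasing (warmup) learning rate schedule η_t = (1/(4√2 + 4)) · min{1/K₀, 1/(3^ρ K_ρ Δ_t^ρ)}, i.e. w_{t+1} = w_t − η_t ∇f(w_t), where Δ_t = f(w_t) − f*. Then for every T ≥ 1 and all t < T: Δ_{t+1} ≤ Δ_t, and min_{t < T} ‖∇f(w_t)‖² ≤ 2Δ₀ / (∑_{t=0}^{T−1} η_t). -/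
/-!
Write `Δ = f w - f*` and `L = K₀ + K_ρ (3Δ)^ρ`; the warmup step size satisfies `η L ≤ 1`.
As long as `f - f*` stays below `3Δ` on the segment `w - u ∇f(w)`, `0 ≤ u < s`, the Hessian is
bounded by `L` there, so the second-order Taylor bound gives
`f (w - s ∇f(w)) ≤ f w - (s/2) ‖∇f(w)‖²`, whence `f - f* ≤ Δ < 3Δ` at `s` as well. A continuity
argument keeps the whole segment up to `s = η` below `3Δ`, so every step decreases `f` by at
least `(η/2) ‖∇f(w)‖²`. Telescoping these decreases and comparing with the smallest gradient
gives the bound on `min ‖∇f(w_t)‖²`.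
-/

open Real Set Finset InnerProductSpace

theorem ContinuousOn.forall_Icc_lt_of_forall_Ico_lt {α β : Type*}
    [ConditionallyCompleteLinearOrder α] [TopologicalSpace α] [OrderTopology α]
    [LinearOrder β] [TopologicalSpace β] [OrderClosedTopology β]
    {φ : α → β} {a b : α} {c : β} (hφ : ContinuousOn φ (Icc a b))
    (h : ∀ s ∈ Icc a b, (∀ u ∈ Ico a s, φ u < c) → φ s < c) :
    ∀ s ∈ Icc a b, φ s < c := by
  by_contra! hbad
  set A := Icc a b ∩ φ ⁻¹' Ici c
  have hA : IsClosed A := hφ.preimage_isClosed_of_isClosed isClosed_Icc isClosed_Ici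
  have hAbdd : BddBelow A := ⟨a, fun s hs => hs.1.1⟩
  obtain ⟨s, hs, hcs⟩ := hbad
  have hmin : sInf A ∈ A := hA.csInf_mem ⟨s, hs, hcs⟩ hAbdd
  refine not_lt.2 hmin.2 (h _ hmin.1 fun u hu => ?_)
  by_contra! hcu
  exact (csInf_le hAbdd ⟨⟨hu.1, hu.2.le.trans hmin.1.2⟩, hcu⟩).not_gt hu.2

theorem le_taylor_two_of_deriv_le {φ ψ ψ' : ℝ → ℝ} {s M : ℝ} (hs : 0 ≤ s)
    (hφ : ∀ u, HasDerivAt φ (ψ u) u) (hψ : ∀ u, HasDerivAt ψ (ψ' u) u)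
    (hM : ∀ u ∈ Ico 0 s, ψ' u ≤ M) :
    φ s ≤ φ 0 + ψ 0 * s + M * s ^ 2 / 2 := by
  have hψle : ∀ u ∈ Icc 0 s, ψ u ≤ ψ 0 + M * u :=
    image_le_of_deriv_right_le_deriv_boundary
      (fun u _ => (hψ u).continuousAt.continuousWithinAt) (fun u _ => (hψ u).hasDerivWithinAt)
      (by simp) (by fun_prop)
      (fun u _ => (((hasDerivAt_id u).const_mul M).const_add (ψ 0)).hasDerivWithinAt)
      (fun u hu => by simpa using hM u hu)
  have hquad : ∀ u, HasDerivAt (fun u => φ 0 + ψ 0 * u + M * u ^ 2 / 2) (ψ 0 + M * u) u := by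
    intro u
    refine ((((hasDerivAt_id u).const_mul (ψ 0)).const_add (φ 0)).add
      (((hasDerivAt_pow 2 u).const_mul M).div_const 2)).congr_deriv ?_
    norm_num
    ring
  exact image_le_of_deriv_right_le_deriv_boundary
    (fun u _ => (hφ u).continuousAt.continuousWithinAt) (fun u _ => (hφ u).hasDerivWithinAt)
    (by simp) (by fun_prop) (fun u _ => (hquad u).hasDerivWithinAt)
    (fun u hu => hψle u (Ico_subset_Icc_self hu)) ⟨hs, le_rfl⟩

section Gradient

variable {E : Type*} [NormedAddCommGroup E] [InnerProductSpace ℝ E] [CompleteSpace E]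
  {f : E → ℝ}

theorem ContDiff.gradient {m n : WithTop ℕ∞} (hf : ContDiff ℝ n f) (hmn : m + 1 ≤ n) :
    ContDiff ℝ m (gradient f) :=
  (toDual ℝ E).symm.contDiff.comp (hf.fderiv_right hmn)

theorem IsLocalMin.gradient_eq_zero {a : E} (h : IsLocalMin f a) : gradient f a = 0 := by
  rw [gradient, h.fderiv_eq_zero, map_zero]

theorem image_sub_smul_le_of_norm_fderiv_gradient_le (hf : Differentiable ℝ f)
    (hg : Differentiable ℝ (gradient f)) {x v : E} {s L : ℝ} (hs : 0 ≤ s)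
    (hL : ∀ u ∈ Ico 0 s, ‖fderiv ℝ (gradient f) (x - u • v)‖ ≤ L) :
    f (x - s • v) ≤ f x - ⟪gradient f x, v⟫_ℝ * s + L * ‖v‖ ^ 2 * s ^ 2 / 2 := by
  have hline : ∀ u : ℝ, HasDerivAt (fun u => x - u • v) (-v) u := fun u => by
    simpa using ((hasDerivAt_id u).smul_const v).const_sub x
  refine (le_taylor_two_of_deriv_le (φ := fun u => f (x - u • v))
    (ψ := fun u => -⟪gradient f (x - u • v), v⟫_ℝ)
    (ψ' := fun u => ⟪fderiv ℝ (gradient f) (x - u • v) v, v⟫_ℝ) (M := L * ‖v‖ ^ 2)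
    hs ?_ ?_ ?_).trans_eq ?_
  · intro u
    have h := (hf _).hasFDerivAt.comp_hasDerivAt u (hline u)
    rwa [map_neg, ← inner_gradient_left] at h
  · intro u
    exact (((hg _).hasFDerivAt.comp_hasDerivAt u (hline u)).inner ℝ
      (hasDerivAt_const u v)).neg.congr_deriv (by simp [inner_neg_left])
  · intro u hu
    calc ⟪fderiv ℝ (gradient f) (x - u • v) v, v⟫_ℝ
        ≤ ‖fderiv ℝ (gradient f) (x - u • v) v‖ * ‖v‖ := real_inner_le_norm _ _
      _ ≤ ‖fderiv ℝ (gradient f) (x - u • v)‖ * ‖v‖ * ‖v‖ := by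
          gcongr
          exact ContinuousLinearMap.le_opNorm _ _
      _ ≤ L * ‖v‖ * ‖v‖ := by gcongr; exact hL u hu
      _ = L * ‖v‖ ^ 2 := by ring
  · simp only [zero_smul, sub_zero]
    ring

theorem image_sub_smul_gradient_le (hf : Differentiable ℝ f) (hg : Differentiable ℝ (gradient f))
    {fstar ρ K0 Kρ : ℝ} (hlow : ∀ y, fstar ≤ f y) (hρ : 0 ≤ ρ) (hKρ : 0 ≤ Kρ)
    (hsmooth : ∀ v, ‖fderiv ℝ (gradient f) v‖ ≤ K0 + Kρ * (f v - fstar) ^ ρ)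
    (x : E) {η : ℝ} (hη : 0 ≤ η) (hηL : η * (K0 + Kρ * (3 * (f x - fstar)) ^ ρ) ≤ 1) :
    f (x - η • gradient f x) ≤ f x - η / 2 * ‖gradient f x‖ ^ 2 := by
  set g := gradient f x
  obtain hΔ | hΔ := (sub_nonneg.2 (hlow x)).eq_or_lt
  · have hg0 : g = 0 :=
      IsLocalMin.gradient_eq_zero (Filter.Eventually.of_forall fun y => by linarith [hlow y])
    simp [hg0]
  set L := K0 + Kρ * (3 * (f x - fstar)) ^ ρ with hLdef
  have hL : 0 ≤ L := (norm_nonneg _).trans ((hsmooth x).trans (by rw [hLdef]; gcongr; linarith))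
  have hdecrease : ∀ s ∈ Icc 0 η,
      (∀ u ∈ Ico 0 s, f (x - u • g) - fstar < 3 * (f x - fstar)) →
      f (x - s • g) ≤ f x - s / 2 * ‖g‖ ^ 2 := by
    intro s hs hbelow
    have hHess : ∀ u ∈ Ico 0 s, ‖fderiv ℝ (gradient f) (x - u • g)‖ ≤ L := fun u hu =>
      (hsmooth _).trans (by rw [hLdef]; gcongr; exacts [sub_nonneg.2 (hlow _), (hbelow u hu).le])
    have hLs : L * s ≤ 1 := by nlinarith [mul_le_mul_of_nonneg_left hs.2 hL]
    have htaylor := image_sub_smul_le_of_norm_fderiv_gradient_le hf hg hs.1 hHess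
    rw [real_inner_self_eq_norm_sq] at htaylor
    nlinarith [mul_le_mul_of_nonneg_right hLs (mul_nonneg hs.1 (sq_nonneg ‖g‖))]
  have hbelow : ∀ s ∈ Icc 0 η, f (x - s • g) - fstar < 3 * (f x - fstar) := by
    refine ContinuousOn.forall_Icc_lt_of_forall_Ico_lt ?_ fun s hs hbelow => ?_
    · have := hf.continuous
      fun_prop
    · nlinarith [hdecrease s hs hbelow, mul_nonneg hs.1 (sq_nonneg ‖g‖)]
  exact hdecrease η ⟨hη, le_rfl⟩ fun u hu => hbelow u (Ico_subset_Icc_self hu)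

end Gradient

theorem Finset.exists_mul_sum_le_sum_mul {ι R : Type*} [CommSemiring R] [LinearOrder R]
    [IsOrderedRing R] {s : Finset ι} (hs : s.Nonempty) {a b : ι → R}
    (ha : ∀ i ∈ s, 0 ≤ a i) : ∃ i ∈ s, b i * ∑ j ∈ s, a j ≤ ∑ j ∈ s, a j * b j := by
  obtain ⟨i, hi, hmin⟩ := s.exists_min_image b hs
  refine ⟨i, hi, ?_⟩
  rw [Finset.mul_sum]
  exact Finset.sum_le_sum fun j hj => by
    rw [mul_comm]
    exact mul_le_mul_of_nonneg_left (hmin j hj) (ha j hj)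

theorem exists_le_two_mul_div_sum_of_le_sub {Δ a b : ℕ → ℝ} {T : ℕ} (hΔ : 0 ≤ Δ T)
    (ha : ∀ t, 0 ≤ a t) (hdecrease : ∀ t, Δ (t + 1) ≤ Δ t - a t / 2 * b t)
    (hpos : 0 < ∑ t ∈ range T, a t) :
    ∃ t < T, b t ≤ 2 * Δ 0 / ∑ t ∈ range T, a t := by
  have htelescope : ∑ t ∈ range T, a t / 2 * b t ≤ Δ 0 - Δ T :=
    (sum_le_sum fun t _ => by linarith [hdecrease t]).trans_eq (sum_range_sub' Δ T)
  obtain ⟨t, ht, hmin⟩ :=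
    exists_mul_sum_le_sum_mul (nonempty_of_sum_ne_zero hpos.ne') (b := b) fun t _ => ha t
  refine ⟨t, mem_range.1 ht, (le_div_iff₀ hpos).2 (hmin.trans ?_)⟩
  have hhalf : ∑ t ∈ range T, a t * b t = 2 * ∑ t ∈ range T, a t / 2 * b t := by
    rw [mul_sum]
    exact sum_congr rfl fun t _ => by ring
  linarith

/-- At `Δ = 0` the paper's minimum is `1/K₀`, but `1 / 0 = 0` makes this step size `0` there. -/
noncomputable def warmupStepSize (ρ K0 Kρ Δ : ℝ) : ℝ :=
  1 / (4 * √2 + 4) * min (1 / K0) (1 / (3 ^ ρ * Kρ * Δ ^ ρ))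

section WarmupStepSize

variable {ρ K0 Kρ Δ : ℝ}

theorem warmupStepSize_nonneg (hK0 : 0 ≤ K0) (hKρ : 0 ≤ Kρ) (hΔ : 0 ≤ Δ) :
    0 ≤ warmupStepSize ρ K0 Kρ Δ := by
  unfold warmupStepSize
  have : 0 ≤ min (1 / K0) (1 / (3 ^ ρ * Kρ * Δ ^ ρ)) := le_min (by positivity) (by positivity)
  positivity

theorem warmupStepSize_pos (hK0 : 0 < K0) (hKρ : 0 < Kρ) (hΔ : 0 < Δ) :
    0 < warmupStepSize ρ K0 Kρ Δ := by
  unfold warmupStepSize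
  have : 0 < min (1 / K0) (1 / (3 ^ ρ * Kρ * Δ ^ ρ)) := lt_min (by positivity) (by positivity)
  positivity

theorem warmupStepSize_mul_le_one (hK0 : 0 < K0) (hKρ : 0 ≤ Kρ) (hΔ : 0 ≤ Δ) :
    warmupStepSize ρ K0 Kρ Δ * (K0 + Kρ * (3 * Δ) ^ ρ) ≤ 1 := by
  unfold warmupStepSize
  set b := 3 ^ ρ * Kρ * Δ ^ ρ
  have hb : Kρ * (3 * Δ) ^ ρ = b := by
    rw [mul_rpow (by norm_num) hΔ]
    ring
  have hmK0 : min (1 / K0) (1 / b) * K0 ≤ 1 :=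
    (mul_le_mul_of_nonneg_right (min_le_left _ _) hK0.le).trans_eq (one_div_mul_cancel hK0.ne')
  have hmb : min (1 / K0) (1 / b) * b ≤ 1 :=
    (mul_le_mul_of_nonneg_right (min_le_right _ _) (by positivity)).trans
      (by rw [one_div]; exact inv_mul_le_one)
  have hc : 1 / (4 * √2 + 4) ≤ 1 / 2 := by
    gcongr
    linarith [sqrt_nonneg 2]
  rw [hb, mul_assoc, mul_add]
  calc 1 / (4 * √2 + 4) * (min (1 / K0) (1 / b) * K0 + min (1 / K0) (1 / b) * b)
      ≤ 1 / 2 * 2 := mul_le_mul hc (by linarith) (by positivity) (by norm_num)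
    _ = 1 := by norm_num

end WarmupStepSize

/-- GD with the warmup schedule, nonconvex case. For a
`(ρ, K₀, K_ρ)`-smooth function with `K₀, K_ρ > 0`, gradient descent with learning rates
`η_t = (1/(4√2+4)) min{1/K₀, 1/(3^ρ K_ρ Δ_t^ρ)}` satisfies `Δ_{t+1} ≤ Δ_t` and
`min_{t<T} ‖∇f(w_t)‖² ≤ 2Δ₀ / ∑_{t<T} η_t`. -/
theorem statement8 (d : ℕ) (f : EuclideanSpace ℝ (Fin d) → ℝ)
    (hf : ContDiff ℝ 2 f)
    (ρ K0 Kρ : ℝ) (hρ : 0 < ρ) (hK0 : 0 < K0) (hKρ : 0 < Kρ)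
    (fstar : ℝ) (hglb : IsGLB (Set.range f) fstar)
    (hsmooth : ∀ v, ‖fderiv ℝ (gradient f) v‖ ≤ K0 + Kρ * (f v - fstar) ^ ρ)
    (w : ℕ → EuclideanSpace ℝ (Fin d))
    (η : ℕ → ℝ)
    (hη : ∀ t, η t = (1 / (4 * Real.sqrt 2 + 4)) *
      min (1 / K0) (1 / (3 ^ ρ * Kρ * (f (w t) - fstar) ^ ρ)))
    (hrec : ∀ t, w (t + 1) = w t - η t • gradient f (w t))
    (T : ℕ) (hT : 1 ≤ T) :
    (∀ t < T, f (w (t + 1)) - fstar ≤ f (w t) - fstar) ∧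
    (∃ t < T, ‖gradient f (w t)‖ ^ 2 ≤
      2 * (f (w 0) - fstar) / ∑ t ∈ Finset.range T, η t) := by
  have hlow : ∀ y, fstar ≤ f y := fun y => hglb.1 ⟨y, rfl⟩
  have hΔ : ∀ t, 0 ≤ f (w t) - fstar := fun t => sub_nonneg.2 (hlow _)
  have hηnn : ∀ t, 0 ≤ η t := fun t => (hη t).symm ▸ warmupStepSize_nonneg hK0.le hKρ.le (hΔ t)
  have hdescent : ∀ t, f (w (t + 1)) ≤ f (w t) - η t / 2 * ‖gradient f (w t)‖ ^ 2 := fun t =>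
    hrec t ▸ image_sub_smul_gradient_le (hf.differentiable two_ne_zero)
      ((hf.gradient le_rfl).differentiable one_ne_zero) hlow hρ.le hKρ.le hsmooth (w t) (hηnn t)
      ((hη t).symm ▸ warmupStepSize_mul_le_one hK0 hKρ.le (hΔ t))
  refine ⟨fun t _ => by nlinarith [hdescent t, hηnn t], ?_⟩
  obtain hΔ0 | hΔ0 := (hΔ 0).eq_or_lt
  · have hg0 : gradient f (w 0) = 0 :=
      IsLocalMin.gradient_eq_zero (Filter.Eventually.of_forall fun y => by linarith [hlow y])
    exact ⟨0, hT, by simp [hg0, ← hΔ0]⟩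
  have hη0 : 0 < η 0 := (hη 0).symm ▸ warmupStepSize_pos hK0 hKρ hΔ0
  exact exists_le_two_mul_div_sum_of_le_sub (Δ := fun t => f (w t) - fstar)
    (b := fun t => ‖gradient f (w t)‖ ^ 2) (hΔ T) hηnn (fun t => by linarith [hdescent t])
    (hη0.trans_le (single_le_sum (fun t _ => hηnn t) (mem_range.2 hT)))
end

section
/- For every K₁ > 0, every Δ > 0, every accuracy ε > 0 with ε ≤ min{2√K₁·Δ/5, 1}, and every non-increasing sequence of positive learning rates (η_t)_{t≥0}, there exist a twice differentiable function f : ℝ → ℝ and an initial point w₀ ∈ ℝ such that: f is bounded below with f* = inf f > −∞; f is (1, ε√K₁, 4πK₁)-smooth, i.e. |f''(x)| ≤ ε√K₁ + 4πK₁(f(x) − f*) for all x ∈ ℝ; f(w₀) − f* ≤ 8Δ; and the gradient descent iterates w_{t+1} = w_t − η_t f'(w_t) satisfy |f'(w_t)| > ε for every t < K₁Δ²/(4ε²). -/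
/-!
The hard function is glued from sine waves `B - (c / ω) sin (ω (x - z))`, which have slope `-c`
and curvature `0` wherever `ω (x - z) ∈ 2πℕ`, and a line of slope `-c`. As long as it only sees
slope `-c`, gradient descent from `0` visits the points `gdPath c η t = c ∑_{u < t} η u`. On
`[gdPath c η t, gdPath c η (t + 1)]` sits a wave of which `⌈η t / s⌉` full periods fill the step
`c η t`, so the next iterate again sees slope `-c`. While `η t ≥ s` these periods are at least
`c s / 2`, so the curvature is at most `4π / s` and the depth at most `c² s / (2π) ≤ c / ω₀`:
the teeth stay at height `D` above the infimum, where `K₁ D ≥ 4π / s` pays for their curvature.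
Once `η t ≤ s`, the remaining fewer than `T` steps travel at most `c T s ≤ D / c`, which is the
length of the line segment that follows the teeth. Beyond it a slow wave of depth `c / ω₀`, with
curvature `c ω₀ ≤ K₀`, attains the infimum `0`. With `c = 2ε` the gradient keeps norm `2ε > ε`.
-/

open Real

noncomputable section

namespace GDLowerBound

theorem hasDerivAt_ite_le {F G F' G' : ℝ → ℝ} {a : ℝ}
    (hF : ∀ x, HasDerivAt F (F' x) x) (hG : ∀ x, HasDerivAt G (G' x) x)
    (h₀ : F a = G a) (h₁ : F' a = G' a) (x : ℝ) :
    HasDerivAt (fun y => if y ≤ a then F y else G y) (if x ≤ a then F' x else G' x) x := by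
  rcases lt_trichotomy x a with hx | rfl | hx
  · rw [if_pos hx.le]
    refine (hF x).congr_of_eventuallyEq ?_
    filter_upwards [Iio_mem_nhds hx] with y hy
    rw [if_pos hy.le]
  · rw [if_pos le_rfl]
    have hl : HasDerivWithinAt (fun y => if y ≤ x then F y else G y) (F' x) (Set.Iic x) x :=
      (hF x).hasDerivWithinAt.congr (fun y hy => if_pos hy) (if_pos le_rfl)
    have hr : HasDerivWithinAt (fun y => if y ≤ x then F y else G y) (F' x) (Set.Ici x) x := by
      refine h₁ ▸ (hG x).hasDerivWithinAt.congr (fun y hy => ?_) (by rw [if_pos le_rfl, h₀])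
      split_ifs with h
      · rw [le_antisymm h hy, h₀]
      · rfl
    simpa [Set.Iic_union_Ici] using hl.union hr
  · rw [if_neg hx.not_ge]
    refine (hG x).congr_of_eventuallyEq ?_
    filter_upwards [Ioi_mem_nhds hx] with y hy
    rw [if_neg (not_le.mpr hy)]

structure Jet2 where
  fn : ℝ → ℝ
  d1 : ℝ → ℝ
  d2 : ℝ → ℝ

namespace Jet2

def eval (J : Jet2) (x : ℝ) : ℝ × ℝ × ℝ := (J.fn x, J.d1 x, J.d2 x)

def HasDerivs (J : Jet2) : Prop :=
  ∀ x, HasDerivAt J.fn (J.d1 x) x ∧ HasDerivAt J.d1 (J.d2 x) x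

def glue (J : Jet2) (a : ℝ) (K : Jet2) : Jet2 where
  fn x := if x ≤ a then J.fn x else K.fn x
  d1 x := if x ≤ a then J.d1 x else K.d1 x
  d2 x := if x ≤ a then J.d2 x else K.d2 x

variable {J K : Jet2} {a x : ℝ}

theorem eval_glue_of_le (h : x ≤ a) : (J.glue a K).eval x = J.eval x := by
  simp [eval, glue, h]

theorem eval_glue_of_lt (h : a < x) : (J.glue a K).eval x = K.eval x := by
  simp [eval, glue, not_le.mpr h]

theorem forall_glue {P : ℝ × ℝ × ℝ → Prop} (hJ : ∀ x ≤ a, P (J.eval x))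
    (hK : ∀ x, a < x → P (K.eval x)) (x : ℝ) : P ((J.glue a K).eval x) := by
  rcases le_or_gt x a with h | h
  · rw [eval_glue_of_le h]; exact hJ x h
  · rw [eval_glue_of_lt h]; exact hK x h

theorem HasDerivs.glue (hJ : J.HasDerivs) (hK : K.HasDerivs) (h : J.eval a = K.eval a) :
    (J.glue a K).HasDerivs := by
  simp only [eval, Prod.mk.injEq] at h
  exact fun x => ⟨hasDerivAt_ite_le (fun y => (hJ y).1) (fun y => (hK y).1) h.1 h.2.1 x,
    hasDerivAt_ite_le (fun y => (hJ y).2) (fun y => (hK y).2) h.2.1 h.2.2 x⟩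

theorem HasDerivs.deriv_fn (hJ : J.HasDerivs) : deriv J.fn = J.d1 :=
  funext fun x => (hJ x).1.deriv

theorem HasDerivs.deriv_d1 (hJ : J.HasDerivs) : deriv J.d1 = J.d2 :=
  funext fun x => (hJ x).2.deriv

theorem HasDerivs.differentiable_fn (hJ : J.HasDerivs) : Differentiable ℝ J.fn :=
  fun x => (hJ x).1.differentiableAt

theorem HasDerivs.differentiable_d1 (hJ : J.HasDerivs) : Differentiable ℝ J.d1 :=
  fun x => (hJ x).2.differentiableAt

end Jet2

open Jet2

def wave (c ω z B : ℝ) : Jet2 where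
  fn x := B - c / ω * sin (ω * (x - z))
  d1 x := -c * cos (ω * (x - z))
  d2 x := c * ω * sin (ω * (x - z))

def line (c z B : ℝ) : Jet2 where
  fn x := B - c * (x - z)
  d1 _ := -c
  d2 _ := 0

section wave

variable {c ω z B : ℝ}

theorem wave_hasDerivs (hω : ω ≠ 0) : (wave c ω z B).HasDerivs := by
  intro x
  have hθ : HasDerivAt (fun y => ω * (y - z)) ω x := by
    simpa using ((hasDerivAt_id x).sub_const z).const_mul ω
  constructor
  · exact ((hθ.sin.const_mul (c / ω)).const_sub B).congr_deriv (by simp only [wave]; field_simp)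
  · exact (hθ.cos.const_mul (-c)).congr_deriv (by simp only [wave]; ring)

theorem wave_eval_of_mul_eq {x : ℝ} {k : ℕ} (h : ω * (x - z) = k * (2 * π)) :
    (wave c ω z B).eval x = (B, -c, 0) := by
  have hsin : sin (k * (2 * π)) = 0 := by simpa using sin_nat_mul_two_pi_sub 0 k
  simp [eval, wave, h, hsin, cos_nat_mul_two_pi]

theorem wave_eval_self : (wave c ω z B).eval z = (B, -c, 0) :=
  wave_eval_of_mul_eq (k := 0) (by simp)

theorem wave_fn_quarter_period (hω : ω ≠ 0) :
    (wave c ω z B).fn (z + π / (2 * ω)) = B - c / ω := by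
  simp only [wave, add_sub_cancel_left]
  rw [show ω * (π / (2 * ω)) = π / 2 by field_simp, sin_pi_div_two, mul_one]

theorem wave_fn_ge (hc : 0 ≤ c) (hω : 0 < ω) (x : ℝ) : B - c / ω ≤ (wave c ω z B).fn x := by
  have := mul_le_mul_of_nonneg_left (sin_le_one (ω * (x - z))) (div_nonneg hc hω.le)
  simp only [wave]; linarith

theorem abs_wave_d2_le (hc : 0 ≤ c) (hω : 0 ≤ ω) (x : ℝ) : |(wave c ω z B).d2 x| ≤ c * ω := by
  simp only [wave, abs_mul, abs_of_nonneg (mul_nonneg hc hω)]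
  exact mul_le_of_le_one_right (mul_nonneg hc hω) (abs_sin_le_one _)

end wave

section line

variable {c z B : ℝ}

theorem line_hasDerivs : (line c z B).HasDerivs := fun x =>
  ⟨show HasDerivAt (fun y => B - c * (y - z)) (-c) x by
    simpa using (((hasDerivAt_id x).sub_const z).const_mul c).const_sub B,
    hasDerivAt_const x (-c)⟩

theorem line_eval_self : (line c z B).eval z = (B, -c, 0) := by
  simp [eval, line]

theorem line_eval_add_div (hc : c ≠ 0) (D : ℝ) : (line c z B).eval (z + D / c) = (B - D, -c, 0) := by
  simp [eval, line, mul_div_cancel₀ D hc]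

end line

/-- The `(1, K₀, K₁)`-smoothness inequality at a point where `(f, f', f'')` takes the value `v`,
for a function with infimum `0`. -/
def SmoothBound (K₀ K₁ : ℝ) (v : ℝ × ℝ × ℝ) : Prop := 0 ≤ v.1 ∧ |v.2.2| ≤ K₀ + K₁ * v.1

theorem wave_smoothBound {c ω z B K₀ K₁ : ℝ} (hc : 0 ≤ c) (hω : 0 < ω) (hK₁ : 0 ≤ K₁)
    (hB : 0 ≤ B - c / ω) (h : c * ω ≤ K₀ + K₁ * (B - c / ω)) (x : ℝ) :
    SmoothBound K₀ K₁ ((wave c ω z B).eval x) :=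
  have hfn := wave_fn_ge (z := z) (B := B) hc hω x
  ⟨hB.trans hfn, (abs_wave_d2_le (B := B) hc hω.le x).trans (h.trans (by gcongr; exact hfn))⟩

def gdPath (c : ℝ) (η : ℕ → ℝ) (t : ℕ) : ℝ := c * ∑ u ∈ Finset.range t, η u

def toothFreq (c s : ℝ) (η : ℕ → ℝ) (t : ℕ) : ℝ := 2 * π * ⌈η t / s⌉₊ / (c * η t)

def saw (c s ω₀ B : ℝ) (η : ℕ → ℝ) : ℕ → Jet2
  | 0 => wave c ω₀ 0 B
  | k + 1 => (saw c s ω₀ B η k).glue (gdPath c η k) (wave c (toothFreq c s η k) (gdPath c η k) B)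

def hardInstance (c s ω₀ D : ℝ) (η : ℕ → ℝ) (m : ℕ) : Jet2 :=
  ((saw c s ω₀ (D + c / ω₀) η m).glue (gdPath c η m) (line c (gdPath c η m) (D + c / ω₀))).glue
    (gdPath c η m + D / c) (wave c ω₀ (gdPath c η m + D / c) (c / ω₀))

section gdPath

variable {c s : ℝ} {η : ℕ → ℝ}

theorem gdPath_zero : gdPath c η 0 = 0 := by simp [gdPath]

theorem gdPath_succ (t : ℕ) : gdPath c η (t + 1) = gdPath c η t + c * η t := by
  simp [gdPath, Finset.sum_range_succ, mul_add]

theorem gdPath_strictMono (hc : 0 < c) (hη : ∀ t, 0 < η t) : StrictMono (gdPath c η) :=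
  strictMono_nat_of_lt_succ fun t => by rw [gdPath_succ]; linarith [mul_pos hc (hη t)]

theorem gdPath_le_add_of_le (hc : 0 ≤ c) {m t : ℕ} (hmt : m ≤ t)
    (hη : ∀ u ∈ Finset.Ico m t, η u ≤ s) :
    gdPath c η t ≤ gdPath c η m + c * ((t - m : ℕ) * s) := by
  have hsum : ∑ u ∈ Finset.Ico m t, η u ≤ (t - m : ℕ) * s := by
    simpa using Finset.sum_le_card_nsmul _ _ _ hη
  have hsplit : gdPath c η t = gdPath c η m + c * ∑ u ∈ Finset.Ico m t, η u := by
    rw [gdPath, gdPath, Finset.sum_Ico_eq_sub _ hmt]; ring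
  rw [hsplit]
  gcongr

theorem gd_eq_gdPath {g : ℝ → ℝ} {w : ℕ → ℝ} (h₀ : w 0 = 0)
    (hstep : ∀ t, w (t + 1) = w t - η t * g (w t)) :
    ∀ t, (∀ u < t, g (gdPath c η u) = -c) → w t = gdPath c η t
  | 0, _ => by rw [h₀, gdPath_zero]
  | t + 1, hg => by
    rw [hstep, gd_eq_gdPath h₀ hstep t fun u hu => hg u (by omega), hg t (by omega), gdPath_succ]
    ring

theorem exists_switch_time (hη : Antitone η) (s T : ℝ) :
    ∃ m : ℕ, (∀ t < m, s ≤ η t) ∧ ∀ t, m ≤ t → (t : ℝ) < T → η t ≤ s := by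
  classical
  have hex : ∃ t : ℕ, η t ≤ s ∨ T ≤ t := ⟨⌈T⌉₊, Or.inr (Nat.le_ceil T)⟩
  refine ⟨Nat.find hex, fun t ht => ?_, fun t ht hT => ?_⟩
  · exact (not_le.mp (not_or.mp (Nat.find_min hex ht)).1).le
  · rcases Nat.find_spec hex with h | h
    · exact (hη ht).trans h
    · exact absurd (h.trans (by exact_mod_cast ht)) hT.not_ge

theorem gdPath_le_of_switch (hc : 0 < c) (hη : ∀ t, 0 < η t) (hs : 0 ≤ s) {m t : ℕ} {T : ℝ}
    (hswitch : ∀ u, m ≤ u → (u : ℝ) < T → η u ≤ s) (ht : (t : ℝ) < T) :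
    gdPath c η t ≤ gdPath c η m + c * T * s := by
  have hT : 0 ≤ T := (Nat.cast_nonneg t).trans ht.le
  rcases le_or_gt t m with htm | hmt
  · have := (gdPath_strictMono hc hη).monotone htm
    nlinarith [mul_nonneg (mul_nonneg hc.le hT) hs]
  · have hcast : ((t - m : ℕ) : ℝ) ≤ T := (Nat.cast_le.mpr (Nat.sub_le t m)).trans ht.le
    calc gdPath c η t ≤ gdPath c η m + c * ((t - m : ℕ) * s) :=
          gdPath_le_add_of_le hc.le hmt.le fun u hu =>
            hswitch u (Finset.mem_Ico.mp hu).1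
              (lt_trans (by exact_mod_cast (Finset.mem_Ico.mp hu).2) ht)
      _ ≤ gdPath c η m + c * T * s := by
          rw [mul_assoc]; gcongr

theorem toothFreq_mul_step (hc : c ≠ 0) {t : ℕ} (hη : η t ≠ 0) :
    toothFreq c s η t * (gdPath c η (t + 1) - gdPath c η t) = ⌈η t / s⌉₊ * (2 * π) := by
  rw [toothFreq, gdPath_succ]
  field_simp
  ring

theorem toothFreq_pos (hc : 0 < c) (hs : 0 < s) {t : ℕ} (hη : 0 < η t) :
    0 < toothFreq c s η t := by
  have : 0 < ⌈η t / s⌉₊ := Nat.ceil_pos.mpr (div_pos hη hs)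
  unfold toothFreq
  positivity

theorem div_toothFreq_le (hc : 0 < c) (hs : 0 < s) {t : ℕ} (hη : 0 < η t) :
    c / toothFreq c s η t ≤ c ^ 2 * s / (2 * π) := by
  have hn : η t / s ≤ ⌈η t / s⌉₊ := Nat.le_ceil _
  have hnpos : (0 : ℝ) < ⌈η t / s⌉₊ := by exact_mod_cast Nat.ceil_pos.mpr (div_pos hη hs)
  rw [div_le_iff₀ hs] at hn
  rw [toothFreq, div_div_eq_mul_div, div_le_div_iff₀ (by positivity) (by positivity)]
  nlinarith [mul_le_mul_of_nonneg_left hn (by positivity : (0 : ℝ) ≤ c ^ 2 * (2 * π))]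

theorem mul_toothFreq_le (hc : 0 < c) (hs : 0 < s) {t : ℕ} (hη : s ≤ η t) :
    c * toothFreq c s η t ≤ 4 * π / s := by
  have hηpos : 0 < η t := hs.trans_le hη
  have hn : (⌈η t / s⌉₊ : ℝ) < η t / s + 1 := Nat.ceil_lt_add_one (by positivity)
  have h1 : 1 ≤ η t / s := (one_le_div₀ hs).mpr hη
  have hn2 : (⌈η t / s⌉₊ : ℝ) * s ≤ 2 * η t := by
    rw [← le_div_iff₀ hs]; linarith [show 2 * η t / s = 2 * (η t / s) by ring]
  rw [toothFreq, mul_div_assoc', div_le_div_iff₀ (by positivity) hs]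
  nlinarith [mul_le_mul_of_nonneg_left hn2 (by positivity : (0 : ℝ) ≤ 2 * π * c)]

end gdPath

section saw

variable {c s ω₀ B D : ℝ} {η : ℕ → ℝ}

theorem saw_eval_of_le (hc : 0 < c) (hη : ∀ t, 0 < η t) {k n : ℕ} {x : ℝ} (hkn : k ≤ n)
    (hx : x ≤ gdPath c η k) : (saw c s ω₀ B η n).eval x = (saw c s ω₀ B η k).eval x := by
  induction n, hkn using Nat.le_induction with
  | base => rfl
  | succ n hkn ih =>
    rw [saw, eval_glue_of_le (hx.trans ((gdPath_strictMono hc hη).monotone hkn)), ih]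

theorem saw_eval_gdPath (hc : 0 < c) (hη : ∀ t, 0 < η t) :
    ∀ k, (saw c s ω₀ B η k).eval (gdPath c η k) = (B, -c, 0)
  | 0 => by rw [gdPath_zero]; exact wave_eval_self
  | k + 1 => by
    rw [saw, eval_glue_of_lt (gdPath_strictMono hc hη k.lt_succ_self)]
    exact wave_eval_of_mul_eq (toothFreq_mul_step hc.ne' (hη k).ne')

theorem saw_hasDerivs (hc : 0 < c) (hs : 0 < s) (hω₀ : ω₀ ≠ 0) (hη : ∀ t, 0 < η t) :
    ∀ k, (saw c s ω₀ B η k).HasDerivs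
  | 0 => wave_hasDerivs hω₀
  | k + 1 => (saw_hasDerivs hc hs hω₀ hη k).glue
      (wave_hasDerivs (toothFreq_pos hc hs (hη k)).ne')
      (by rw [saw_eval_gdPath hc hη, wave_eval_self])

theorem forall_saw {P : ℝ × ℝ × ℝ → Prop} (h₀ : ∀ x, P ((wave c ω₀ 0 B).eval x)) {n : ℕ}
    (hteeth : ∀ t < n, ∀ x, P ((wave c (toothFreq c s η t) (gdPath c η t) B).eval x)) (x : ℝ) :
    P ((saw c s ω₀ B η n).eval x) := by
  induction n generalizing x with
  | zero => exact h₀ x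
  | succ n ih =>
    exact forall_glue (fun y _ => ih (fun t ht => hteeth t (by omega)) y)
      (fun y _ => hteeth n n.lt_succ_self y) x

variable {m : ℕ}

theorem hardInstance_hasDerivs (hc : 0 < c) (hs : 0 < s) (hω₀ : ω₀ ≠ 0) (hD : 0 < D)
    (hη : ∀ t, 0 < η t) : (hardInstance c s ω₀ D η m).HasDerivs := by
  refine ((saw_hasDerivs hc hs hω₀ hη m).glue line_hasDerivs ?_).glue (wave_hasDerivs hω₀) ?_
  · rw [saw_eval_gdPath hc hη, line_eval_self]
  · rw [eval_glue_of_lt (lt_add_of_pos_right _ (div_pos hD hc)), line_eval_add_div hc.ne',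
      wave_eval_self, add_sub_cancel_left]

theorem hardInstance_fn_zero (hc : 0 < c) (hD : 0 ≤ D) (hη : ∀ t, 0 < η t) :
    (hardInstance c s ω₀ D η m).fn 0 = D + c / ω₀ := by
  have hm : 0 ≤ gdPath c η m := gdPath_zero (c := c) (η := η) ▸
    (gdPath_strictMono hc hη).monotone (Nat.zero_le m)
  change ((hardInstance c s ω₀ D η m).eval 0).1 = _
  rw [hardInstance, eval_glue_of_le (by positivity), eval_glue_of_le hm,
    saw_eval_of_le hc hη (Nat.zero_le m) gdPath_zero.ge, saw, wave_eval_self]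

theorem hardInstance_fn_quarter_period (hω₀ : 0 < ω₀) :
    (hardInstance c s ω₀ D η m).fn (gdPath c η m + D / c + π / (2 * ω₀)) = 0 := by
  change ((hardInstance c s ω₀ D η m).eval _).1 = _
  rw [hardInstance, eval_glue_of_lt (lt_add_of_pos_right _ (by positivity))]
  exact (wave_fn_quarter_period hω₀.ne').trans (sub_self _)

theorem hardInstance_d1_gdPath (hc : 0 < c) (hη : ∀ t, 0 < η t) {t : ℕ}
    (ht : gdPath c η t ≤ gdPath c η m + D / c) :
    (hardInstance c s ω₀ D η m).d1 (gdPath c η t) = -c := by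
  change ((hardInstance c s ω₀ D η m).eval _).2.1 = _
  rw [hardInstance, eval_glue_of_le ht]
  rcases le_or_gt t m with htm | hmt
  · rw [eval_glue_of_le ((gdPath_strictMono hc hη).monotone htm), saw_eval_of_le hc hη htm le_rfl,
      saw_eval_gdPath hc hη]
  · rw [eval_glue_of_lt (gdPath_strictMono hc hη hmt)]
    rfl

theorem hardInstance_smoothBound (hc : 0 < c) (hs : 0 < s) (hω₀ : 0 < ω₀) (hD : 0 < D)
    (hη : ∀ t, 0 < η t) (hηs : ∀ t < m, s ≤ η t) (hlevel : c * s * ω₀ ≤ 2 * π) {K₀ K₁ : ℝ}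
    (hK₀ : c * ω₀ ≤ K₀) (hK₁ : 4 * π / s ≤ K₁ * D) (x : ℝ) :
    SmoothBound K₀ K₁ ((hardInstance c s ω₀ D η m).eval x) := by
  have hK₀' : 0 ≤ K₀ := (mul_pos hc hω₀).le.trans hK₀
  have hK₁' : 0 ≤ K₁ := (pos_of_mul_pos_left ((by positivity : 0 < 4 * π / s).trans_le hK₁) hD.le).le
  have hDK : 0 ≤ K₁ * D := mul_nonneg hK₁' hD.le
  have hdepth : c ^ 2 * s / (2 * π) ≤ c / ω₀ := by
    rw [div_le_div_iff₀ (by positivity) hω₀]; nlinarith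
  rw [hardInstance]
  rcases le_or_gt x (gdPath c η m + D / c) with hxe | hxe
  · rw [eval_glue_of_le hxe]
    rcases le_or_gt x (gdPath c η m) with hxm | hxm
    · rw [eval_glue_of_le hxm]
      refine forall_saw (fun y => ?_) (fun t ht y => ?_) x
      · refine wave_smoothBound hc.le hω₀ hK₁' (by simpa using hD.le) ?_ y
        simpa using hK₀.trans (le_add_of_nonneg_right hDK)
      · have hdeep : D ≤ D + c / ω₀ - c / toothFreq c s η t := by
          linarith [div_toothFreq_le hc hs (hη t)]
        refine wave_smoothBound hc.le (toothFreq_pos hc hs (hη t)) hK₁' (hD.le.trans hdeep) ?_ y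
        calc c * toothFreq c s η t ≤ K₁ * D := (mul_toothFreq_le hc hs (hηs t ht)).trans hK₁
          _ ≤ K₀ + K₁ * (D + c / ω₀ - c / toothFreq c s η t) := by
              nlinarith [mul_le_mul_of_nonneg_left hdeep hK₁']
    · rw [eval_glue_of_lt hxm]
      have hdrop : c * (x - gdPath c η m) ≤ D := by
        rw [← sub_le_iff_le_add', le_div_iff₀ hc] at hxe; linarith
      have hval : 0 ≤ D + c / ω₀ - c * (x - gdPath c η m) := by
        have : 0 < c / ω₀ := by positivity
        linarith
      exact ⟨hval, by simpa [line, eval] using add_nonneg hK₀' (mul_nonneg hK₁' hval)⟩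
  · rw [eval_glue_of_lt hxe]
    exact wave_smoothBound hc.le hω₀ hK₁' (by simp) (by simpa using hK₀) x

theorem exists_hard_function (hc : 0 < c) (hs : 0 < s) (hω₀ : 0 < ω₀) (hD : 0 < D)
    (hη : ∀ t, 0 < η t) (hηmono : Antitone η) {T K₀ K₁ : ℝ} (hT : c ^ 2 * T * s ≤ D)
    (hlevel : c * s * ω₀ ≤ 2 * π) (hK₀ : c * ω₀ ≤ K₀) (hK₁ : 4 * π / s ≤ K₁ * D) :
    ∃ f : ℝ → ℝ, (Differentiable ℝ f ∧ Differentiable ℝ (deriv f)) ∧ IsGLB (Set.range f) 0 ∧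
      (∀ x, |deriv (deriv f) x| ≤ K₀ + K₁ * f x) ∧ f 0 = D + c / ω₀ ∧
      ∀ w : ℕ → ℝ, w 0 = 0 → (∀ t, w (t + 1) = w t - η t * deriv f (w t)) →
        ∀ t : ℕ, (t : ℝ) < T → |deriv f (w t)| = c := by
  obtain ⟨m, hm_before, hm_after⟩ := exists_switch_time hηmono s T
  set J := hardInstance c s ω₀ D η m
  have hJ : J.HasDerivs := hardInstance_hasDerivs hc hs hω₀.ne' hD hη
  have hsmooth := hardInstance_smoothBound hc hs hω₀ hD hη hm_before hlevel hK₀ hK₁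
  have hd1 (u : ℕ) (hu : (u : ℝ) < T) : J.d1 (gdPath c η u) = -c := by
    refine hardInstance_d1_gdPath hc hη ((gdPath_le_of_switch hc hη hs.le hm_after hu).trans ?_)
    rw [add_le_add_iff_left, le_div_iff₀ hc]
    linarith [show c * T * s * c = c ^ 2 * T * s by ring]
  refine ⟨J.fn, ⟨hJ.differentiable_fn, hJ.deriv_fn ▸ hJ.differentiable_d1⟩,
    IsLeast.isGLB ⟨⟨_, hardInstance_fn_quarter_period hω₀⟩, ?_⟩,
    fun x => hJ.deriv_fn ▸ hJ.deriv_d1 ▸ (hsmooth x).2, hardInstance_fn_zero hc hD.le hη, ?_⟩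
  · rintro _ ⟨x, rfl⟩
    exact (hsmooth x).1
  · intro w hw0 hstep t ht
    rw [hJ.deriv_fn] at hstep ⊢
    rw [gd_eq_gdPath hw0 hstep t fun u hu => hd1 u (lt_trans (by exact_mod_cast hu) ht), hd1 t ht,
      abs_neg, abs_of_pos hc]

end saw

end GDLowerBound

open GDLowerBound

/-- Lower bound for GD with non-increasing learning rates. For every
`K₁ > 0`, `Δ > 0`, accuracy `0 < ε ≤ min{2√K₁ Δ/5, 1}` and every non-increasing sequence
of positive learning rates `(η_t)`, there exist a twice differentiable `f : ℝ → ℝ`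
bounded below with infimum `f*` which is `(1, ε√K₁, 4πK₁)`-smooth and satisfies
`f(w₀) − f* ≤ 8Δ`, such that the gradient descent iterates need at least `K₁Δ²/(4ε²)`
iterations to reach `|f'(w_t)| ≤ ε`. -/
theorem statement12 (K1 Δ ε : ℝ) (hK1 : 0 < K1) (hΔ : 0 < Δ)
    (hε0 : 0 < ε) (hε : ε ≤ min (2 * Real.sqrt K1 * Δ / 5) 1)
    (η : ℕ → ℝ) (hηpos : ∀ t, 0 < η t) (hηmono : ∀ s t, s ≤ t → η t ≤ η s) :
    ∃ (f : ℝ → ℝ) (w0 fstar : ℝ),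
      (Differentiable ℝ f ∧ Differentiable ℝ (deriv f)) ∧
      IsGLB (Set.range f) fstar ∧
      (∀ x : ℝ, |deriv (deriv f) x| ≤ ε * Real.sqrt K1 + 4 * π * K1 * (f x - fstar)) ∧
      f w0 - fstar ≤ 8 * Δ ∧
      ∀ w : ℕ → ℝ, w 0 = w0 → (∀ t, w (t + 1) = w t - η t * deriv f (w t)) →
        ∀ t : ℕ, (t : ℝ) < K1 * Δ ^ 2 / (4 * ε ^ 2) → ε < |deriv f (w t)| := by
  have hr : 0 < √K1 := Real.sqrt_pos.mpr hK1
  have hεΔ : 5 * ε ≤ 2 * √K1 * Δ := by linarith [(le_min_iff.mp hε).1]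
  have hεK : 5 * (ε * √K1) ≤ 2 * K1 * Δ := by
    nlinarith [mul_le_mul_of_nonneg_right hεΔ hr.le, Real.mul_self_sqrt hK1.le]
  -- slope `c = 2ε`, threshold `s = 1 / (K1 Δ)` and drop `D = Δ`, so that `c² T s = D`;
  -- outer frequency `ω₀ = √K1 / 2`, so that `c ω₀ = ε √K1`
  obtain ⟨f, hdiff, hglb, hsmooth, hf0, hgd⟩ :=
    exists_hard_function (c := 2 * ε) (s := 1 / (K1 * Δ)) (ω₀ := √K1 / 2)
      (T := K1 * Δ ^ 2 / (4 * ε ^ 2)) (K₀ := ε * √K1) (K₁ := 4 * π * K1)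
      (by positivity) (by positivity) (by positivity) hΔ hηpos hηmono
      (le_of_eq (by field_simp; ring)) (by field_simp; nlinarith [pi_gt_three, mul_pos hK1 hΔ])
      (le_of_eq (by ring)) (le_of_eq (by field_simp))
  refine ⟨f, 0, 0, hdiff, hglb, fun x => by simpa using hsmooth x, ?_,
    fun w hw0 hstep t ht => by linarith [hgd w hw0 hstep t ht]⟩
  have hdepth : 2 * ε / (√K1 / 2) ≤ 7 * Δ := by rw [div_le_iff₀ (by positivity)]; nlinarith
  rw [hf0, sub_zero]
  linarith

end
end

section
/- Let Δ > 0, K₁ > 0, let η > 2/(K₁Δ), and let G ∈ ℝ with G > 2πΔ + Δ/2. Define α = ηK₁Δ/(2π) (so α > 1/π), b = 2π/(η√K₁·Δ) = √K₁/α, a = Δ·α·√(1 + α²), d = a + G − (α/(α + √(1 + α²)))·Δ, and for a given point x₀ ∈ ℝ set c = arctan(−ηK₁Δ/(2π)) − b·x₀. Then the function f(x) = a·sin(bx + c) + d satisfies: f(x) > 2πΔ for all x ∈ ℝ; |f''(x)| ≤ 2πK₁Δ ≤ K₁·f(x) for all x ∈ ℝ; and f(x₀) = G. -/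
open Real

/-!
The parameters are chosen so that the sine starts at `bx₀ + c = arctan (-α)`, where
`a (1 + sin (arctan (-α))) = Δα(√(1+α²) - α) = Δα / (α + √(1+α²))`; subtracting this from
`a + G` in `d` gives `f x₀ = G`. The minimum `d - a = G - Δα / (α + √(1+α²))` exceeds
`G - Δ/2 > 2πΔ`, and `|f''| ≤ ab² = K₁Δ√(1+α²)/α ≤ 2πK₁Δ` because `α > 1/π` forces
`√(1+α²) ≤ 2πα`.
-/

lemma deriv_deriv_mul_sin_add (a b c d x : ℝ) :
    deriv (deriv fun y => a * sin (b * y + c) + d) x = -(a * b ^ 2 * sin (b * x + c)) := by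
  have hlin (y : ℝ) : HasDerivAt (fun z => b * z + c) b y := by
    simpa using ((hasDerivAt_id y).const_mul b).add_const c
  have hderiv : deriv (fun y => a * sin (b * y + c) + d) = fun y => a * b * cos (b * y + c) := by
    funext y
    rw [(((hlin y).sin.const_mul a).add_const d).deriv]
    ring
  rw [hderiv, ((hlin x).cos.const_mul (a * b)).deriv]
  ring

lemma abs_deriv_deriv_mul_sin_add_le (a b c d x : ℝ) :
    |deriv (deriv fun y => a * sin (b * y + c) + d) x| ≤ |a| * b ^ 2 := by
  rw [deriv_deriv_mul_sin_add, abs_neg, abs_mul, abs_mul, abs_sq]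
  exact mul_le_of_le_one_right (by positivity) (abs_sin_le_one _)

lemma sub_abs_le_mul_sin_add (a t d : ℝ) : d - |a| ≤ a * sin t + d := by
  have h : |a * sin t| ≤ |a| := by
    rw [abs_mul]
    exact mul_le_of_le_one_right (abs_nonneg a) (abs_sin_le_one t)
  linarith [neg_abs_le (a * sin t)]

lemma lt_sqrt_one_add_sq (α : ℝ) : α < √(1 + α ^ 2) :=
  lt_sqrt_of_sq_lt (by linarith)

lemma self_add_sqrt_one_add_sq_pos (α : ℝ) : 0 < α + √(1 + α ^ 2) := by
  have h := lt_sqrt_one_add_sq (-α)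
  rw [neg_sq] at h
  linarith

lemma div_self_add_sqrt_one_add_sq_lt_half (α : ℝ) : α / (α + √(1 + α ^ 2)) < 1 / 2 := by
  rw [div_lt_iff₀ (self_add_sqrt_one_add_sq_pos α)]
  linarith [lt_sqrt_one_add_sq α]

lemma sqrt_one_add_sq_mul_one_add_sin_arctan_neg (α : ℝ) :
    √(1 + α ^ 2) * (1 + sin (arctan (-α))) = (α + √(1 + α ^ 2))⁻¹ := by
  have hsq : √(1 + α ^ 2) ^ 2 = 1 + α ^ 2 := sq_sqrt (by positivity)
  have hs : √(1 + α ^ 2) ≠ 0 := (sqrt_pos.mpr (by positivity)).ne'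
  have hsum : α + √(1 + α ^ 2) ≠ 0 := (self_add_sqrt_one_add_sq_pos α).ne'
  rw [sin_arctan, neg_sq]
  field_simp
  linear_combination hsq

lemma sqrt_one_add_sq_le_two_pi_mul {α : ℝ} (hα : 1 / π < α) : √(1 + α ^ 2) ≤ 2 * π * α := by
  have hαπ : 1 < π * α := by rwa [div_lt_iff₀' pi_pos] at hα
  have hαpos : 0 < α := (one_div_pos.mpr pi_pos).trans hα
  rw [sqrt_le_iff]
  constructor
  · positivity
  · have h1 : 1 < (π * α) ^ 2 := by nlinarith
    have h2 : α ^ 2 ≤ (π * α) ^ 2 := by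
      rw [mul_pow]
      exact le_mul_of_one_le_left (sq_nonneg α) (by nlinarith [pi_gt_three])
    nlinarith

/-- Trigonometric building block of the lower-bound construction.
With `α = ηK₁Δ/(2π)` (so `α > 1/π`), `b = 2π/(η√K₁ Δ) = √K₁/α`, `a = Δα√(1+α²)`,
`d = a + G − (α/(α+√(1+α²)))Δ` and `c = arctan(−ηK₁Δ/(2π)) − b x₀`, the function
`f(x) = a sin(bx + c) + d` satisfies `f(x) > 2πΔ`, `|f''(x)| ≤ 2πK₁Δ ≤ K₁ f(x)` for all
`x`, and `f(x₀) = G`. -/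
theorem statement13 (Δ K1 η G x0 : ℝ) (hΔ : 0 < Δ) (hK1 : 0 < K1)
    (hη : 2 / (K1 * Δ) < η) (hG : 2 * π * Δ + Δ / 2 < G)
    (α b a d c : ℝ)
    (hα : α = η * K1 * Δ / (2 * π))
    (hb : b = 2 * π / (η * Real.sqrt K1 * Δ))
    (ha : a = Δ * α * Real.sqrt (1 + α ^ 2))
    (hd : d = a + G - (α / (α + Real.sqrt (1 + α ^ 2))) * Δ)
    (hc : c = Real.arctan (-(η * K1 * Δ) / (2 * π)) - b * x0)
    (f : ℝ → ℝ) (hf : ∀ x, f x = a * Real.sin (b * x + c) + d) :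
    (1 / π < α) ∧ (b = Real.sqrt K1 / α) ∧
    (∀ x : ℝ, 2 * π * Δ < f x) ∧
    (∀ x : ℝ, |deriv (deriv f) x| ≤ 2 * π * K1 * Δ ∧ 2 * π * K1 * Δ ≤ K1 * f x) ∧
    f x0 = G := by
  obtain rfl : f = fun x => a * sin (b * x + c) + d := funext hf
  have hηKΔ : 2 < η * K1 * Δ := by
    rw [div_lt_iff₀ (by positivity)] at hη
    linarith
  have hα1 : 1 / π < α := by
    rw [hα, div_lt_div_iff₀ pi_pos (by positivity)]
    nlinarith [pi_pos]
  have hαpos : 0 < α := (one_div_pos.mpr pi_pos).trans hα1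
  have hsK : √K1 ^ 2 = K1 := sq_sqrt hK1.le
  have hb' : b = √K1 / α := by
    have : √K1 ≠ 0 := (sqrt_pos.mpr hK1).ne'
    rw [hb, hα]
    field_simp
    rw [hsK]
  set s := √(1 + α ^ 2)
  have hapos : 0 < a := by
    have : 0 < s := sqrt_pos.mpr (by positivity)
    rw [ha]
    positivity
  have hlow (x : ℝ) : 2 * π * Δ < a * sin (b * x + c) + d := by
    have hsin := sub_abs_le_mul_sin_add a (b * x + c) d
    have hhalf := mul_lt_mul_of_pos_right (div_self_add_sqrt_one_add_sq_lt_half α) hΔ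
    rw [abs_of_pos hapos] at hsin
    linarith
  have hab2 : |a| * b ^ 2 ≤ 2 * π * K1 * Δ := calc
    |a| * b ^ 2 = K1 * Δ * s / α := by
      rw [abs_of_pos hapos, ha, hb', div_pow, hsK]
      field_simp
    _ ≤ K1 * Δ * (2 * π * α) / α := by gcongr; exact sqrt_one_add_sq_le_two_pi_mul hα1
    _ = 2 * π * K1 * Δ := by field_simp
  have hx0 : b * x0 + c = arctan (-α) := by rw [hc, hα]; ring_nf
  refine ⟨hα1, hb', hlow, fun x => ⟨?_, ?_⟩, ?_⟩
  · exact (abs_deriv_deriv_mul_sin_add_le a b c d x).trans hab2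
  · nlinarith [hlow x]
  · simp only [hx0, hd, ha]
    rw [div_eq_mul_inv, ← sqrt_one_add_sq_mul_one_add_sin_arctan_neg α]
    ring
end

section
/- Let Δ > 0, K₁ > 0, ε > 0 and η > 0 satisfy 5ε/(4√K₁) ≤ Δ/2, η·K₁·Δ > 6 and 2εη√K₁·Δ ≤ Δ. Let x₁ < x₀ be real numbers with x₀ − x₁ = η√K₁·Δ. Define A = 2ε(x₀ − x₁), B = √K₁·Δ·(x₀ − x₁), C = 0, D = K₁Δ(x₀ − x₁)², a = (2A − 2B + C + D)/4, b = (−3A + 3B − 2C − D)/3, c = C/2, d = A, e = D/12 − B/2 + 7Δ + 5ε/(4√K₁), and set ḡ(z) = az⁴ + bz³ + cz² + dz + e and g(y) = ḡ((y − x₁)/(x₀ − x₁)) for y ∈ [x₁, x₀]. Then: g(x₁) = e; g(x₀) = A/2 + 7Δ + 5ε/(4√K₁); g(y) ≥ Δ for all y ∈ [x₁, x₀]; and |g''(y)| ≤ K₁Δ for all y ∈ [x₁, x₀]. -/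
/-!
After the substitution `z = (y - x₁)/(x₀ - x₁)` everything is a statement about the quartic `ḡ`
on `[0, 1]`, and the parameters enter only through `B² = DΔ`, `6B < D` and `0 ≤ A ≤ Δ < B`.
The `A`-part of `12(ḡ - Δ)` is `6Az(z³ - 2z² + 2) ≥ 0`; once `DΔ` is replaced by `B²`, `D` times
the rest is a quadratic form in `(D(1 - z), B)`, positive semidefinite for `z ∈ [0, 1]`.
For the curvature, `ḡ'' = D(3z² - 2z) + 6(B - A)z(1 - z)`, and the chain rule gives
`g'' = ḡ''/(x₀ - x₁)²` with `D/(x₀ - x₁)² = K₁Δ`.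
-/

open Real

section Calculus

variable {𝕜 : Type*} [NontriviallyNormedField 𝕜]

theorem deriv_comp_sub_div (f : 𝕜 → 𝕜) (p L : 𝕜) :
    deriv (fun y => f ((y - p) / L)) = fun y => deriv f ((y - p) / L) / L := by
  ext y
  simp_rw [div_eq_inv_mul, deriv_comp_sub_const (f := fun u => f (L⁻¹ * u)),
    deriv_comp_mul_left, smul_eq_mul]

theorem deriv_deriv_comp_sub_div (f : 𝕜 → 𝕜) (p L y : 𝕜) :
    deriv (deriv fun y => f ((y - p) / L)) y = deriv (deriv f) ((y - p) / L) / L ^ 2 := by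
  simp_rw [deriv_comp_sub_div, div_eq_mul_inv (deriv f _), deriv_mul_const_field,
    deriv_comp_sub_div]
  ring

end Calculus

theorem deriv_cubic (a b c d : ℝ) :
    deriv (fun z => a * z ^ 3 + b * z ^ 2 + c * z + d)
      = fun z => 3 * a * z ^ 2 + 2 * b * z + c := by
  ext z
  refine HasDerivAt.deriv ?_
  convert ((((hasDerivAt_pow 3 z).const_mul a).add ((hasDerivAt_pow 2 z).const_mul b)).add
    ((hasDerivAt_id z).const_mul c)).add_const d using 1
  simp only [id_eq, Pi.add_apply]
  ring

theorem deriv_quartic (a b c d e : ℝ) :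
    deriv (fun z => a * z ^ 4 + b * z ^ 3 + c * z ^ 2 + d * z + e)
      = fun z => 4 * a * z ^ 3 + 3 * b * z ^ 2 + 2 * c * z + d := by
  ext z
  refine HasDerivAt.deriv ?_
  convert (((((hasDerivAt_pow 4 z).const_mul a).add ((hasDerivAt_pow 3 z).const_mul b)).add
    ((hasDerivAt_pow 2 z).const_mul c)).add ((hasDerivAt_id z).const_mul d)).add_const e using 1
  simp only [id_eq, Pi.add_apply]
  ring

theorem deriv_deriv_quartic (a b c d e z : ℝ) :
    deriv (deriv fun z => a * z ^ 4 + b * z ^ 3 + c * z ^ 2 + d * z + e) z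
      = 12 * a * z ^ 2 + 6 * b * z + 2 * c := by
  rw [deriv_quartic, deriv_cubic]
  ring

theorem link_poly_nonneg {B D Δ z : ℝ} (hD : 0 < D) (hBD : B ^ 2 ≤ D * Δ)
    (hz0 : 0 ≤ z) (hz1 : z ≤ 1) :
    0 ≤ D * (1 - z) ^ 2 * (3 * z ^ 2 + 2 * z + 1) - 6 * B * (1 - z) * (1 + z + z ^ 2 - z ^ 3)
      + 72 * Δ := by
  set P := 3 * z ^ 2 + 2 * z + 1
  set Q := 1 + z + z ^ 2 - z ^ 3
  have hQ : 0 ≤ Q ∧ Q ≤ 1 + 2 * z := by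
    have : 0 ≤ z ^ 2 * (1 - z) := mul_nonneg (sq_nonneg z) (sub_nonneg.2 hz1)
    constructor <;> nlinarith
  have hPQ : 0 ≤ 8 * P - Q ^ 2 := by nlinarith
  have key : D * (D * (1 - z) ^ 2 * P - 6 * B * (1 - z) * Q + 72 * Δ)
      = (Q * (D * (1 - z)) - 24 * B) ^ 2 / 8 + (8 * P - Q ^ 2) / 8 * (D * (1 - z)) ^ 2
        + 72 * (D * Δ - B ^ 2) := by
    ring
  have hBD' := sub_nonneg.2 hBD
  exact nonneg_of_mul_nonneg_right (key ▸ by positivity) hD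

theorem link_quartic_lower_bound {A B D Δ z : ℝ} (hA : 0 ≤ A) (hD : 0 < D)
    (hBD : B ^ 2 ≤ D * Δ) (hz0 : 0 ≤ z) (hz1 : z ≤ 1) :
    Δ ≤ (2 * A - 2 * B + D) / 4 * z ^ 4 + (-3 * A + 3 * B - D) / 3 * z ^ 3 + A * z
      + (D / 12 - B / 2 + 7 * Δ) := by
  have hAz : 0 ≤ A * (z * (z ^ 3 - 2 * z ^ 2 + 2)) := by
    have : z ^ 2 ≤ 1 := pow_le_one₀ hz0 hz1
    have : 0 ≤ z ^ 3 := pow_nonneg hz0 3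
    have : 0 ≤ z ^ 3 - 2 * z ^ 2 + 2 := by linarith
    positivity
  linear_combination (1 / 2 : ℝ) * hAz + (1 / 12 : ℝ) * link_poly_nonneg hD hBD hz0 hz1

theorem abs_link_curvature_le {D s z : ℝ} (hs : 0 ≤ s) (hsD : 6 * s ≤ D)
    (hz0 : 0 ≤ z) (hz1 : z ≤ 1) :
    |D * (3 * z ^ 2 - 2 * z) + 6 * s * (z * (1 - z))| ≤ D := by
  have hzz : 0 ≤ z * (1 - z) := mul_nonneg hz0 (sub_nonneg.2 hz1)
  rw [abs_le]
  constructor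
  · nlinarith [sq_nonneg (3 * z - 1)]
  · nlinarith [mul_nonneg hzz (show 0 ≤ 1 + 2 * z by linarith)]

theorem statement14_general (Δ K1 ε η : ℝ) (hΔ : 0 < Δ) (hK1 : 0 < K1) (hε : 0 < ε)
    (hcond2 : 6 < η * K1 * Δ)
    (hcond3 : 2 * ε * η * Real.sqrt K1 * Δ ≤ Δ)
    (x1 x0 : ℝ) (hx : x1 < x0) (hgap : x0 - x1 = η * Real.sqrt K1 * Δ)
    (A B C D a b c d e : ℝ)
    (hA : A = 2 * ε * (x0 - x1))
    (hB : B = Real.sqrt K1 * Δ * (x0 - x1))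
    (hC : C = 0)
    (hD : D = K1 * Δ * (x0 - x1) ^ 2)
    (ha : a = (2 * A - 2 * B + C + D) / 4)
    (hb : b = (-3 * A + 3 * B - 2 * C - D) / 3)
    (hc : c = C / 2)
    (hd : d = A)
    (he : e = D / 12 - B / 2 + 7 * Δ + 5 * ε / (4 * Real.sqrt K1))
    (gbar g : ℝ → ℝ)
    (hgbar : ∀ z, gbar z = a * z ^ 4 + b * z ^ 3 + c * z ^ 2 + d * z + e)
    (hg : ∀ y, g y = gbar ((y - x1) / (x0 - x1))) :
    g x1 = e ∧
    g x0 = A / 2 + 7 * Δ + 5 * ε / (4 * Real.sqrt K1) ∧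
    (∀ y ∈ Set.Icc x1 x0, Δ ≤ g y) ∧
    (∀ y ∈ Set.Icc x1 x0, |deriv (deriv g) y| ≤ K1 * Δ) := by
  have hL : 0 < x0 - x1 := sub_pos.2 hx
  have hsqrt : 0 < √K1 := sqrt_pos.2 hK1
  have hBpos : 0 < B := by rw [hB]; positivity
  have hDB : D = η * K1 * Δ * B := by rw [hD, hB, hgap]; ring
  have hBD : B ^ 2 = D * Δ := by rw [hB, hD, mul_pow, mul_pow, sq_sqrt hK1.le]; ring
  have hAΔ : A ≤ Δ := by rw [hA, hgap]; linear_combination hcond3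
  have h6BD : 6 * B < D := hDB ▸ mul_lt_mul_of_pos_right hcond2 hBpos
  have hΔB : 6 * Δ < B := by nlinarith [mul_lt_mul_of_pos_right h6BD hΔ]
  have hApos : 0 ≤ A := by rw [hA]; positivity
  have hz : ∀ y ∈ Set.Icc x1 x0, 0 ≤ (y - x1) / (x0 - x1) ∧ (y - x1) / (x0 - x1) ≤ 1 :=
    fun y hy => ⟨div_nonneg (by linarith [hy.1]) hL.le, (div_le_one hL).2 (by linarith [hy.2])⟩
  subst a b c d e C
  refine ⟨by simp [hg, hgbar], ?_, fun y hy => ?_, fun y hy => ?_⟩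
  · rw [hg, div_self hL.ne', hgbar]
    ring
  · have hquartic := link_quartic_lower_bound hApos (by linarith) hBD.le
      (hz y hy).1 (hz y hy).2
    have hshift : 0 ≤ 5 * ε / (4 * √K1) := by positivity
    rw [hg, hgbar]
    linear_combination hquartic + hshift
  · rw [funext hg, deriv_deriv_comp_sub_div, funext hgbar, deriv_deriv_quartic, abs_div,
      abs_of_pos (pow_pos hL 2), div_le_iff₀ (pow_pos hL 2), ← hD]
    refine (congrArg abs ?_).trans_le
      (abs_link_curvature_le (s := B - A) (by linarith) (by linarith) (hz y hy).1 (hz y hy).2)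
    ring

/-- Quartic linking piece of the lower-bound construction.
Under the stated parameter conditions, the quartic `g(y) = ḡ((y − x₁)/(x₀ − x₁))` with
`ḡ(z) = az⁴ + bz³ + cz² + dz + e` satisfies `g(x₁) = e`,
`g(x₀) = A/2 + 7Δ + 5ε/(4√K₁)`, `g(y) ≥ Δ` and `|g''(y)| ≤ K₁Δ` on `[x₁, x₀]`. -/
theorem statement14 (Δ K1 ε η : ℝ) (hΔ : 0 < Δ) (hK1 : 0 < K1) (hε : 0 < ε) (hη : 0 < η)
    (hcond1 : 5 * ε / (4 * Real.sqrt K1) ≤ Δ / 2)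
    (hcond2 : 6 < η * K1 * Δ)
    (hcond3 : 2 * ε * η * Real.sqrt K1 * Δ ≤ Δ)
    (x1 x0 : ℝ) (hx : x1 < x0) (hgap : x0 - x1 = η * Real.sqrt K1 * Δ)
    (A B C D a b c d e : ℝ)
    (hA : A = 2 * ε * (x0 - x1))
    (hB : B = Real.sqrt K1 * Δ * (x0 - x1))
    (hC : C = 0)
    (hD : D = K1 * Δ * (x0 - x1) ^ 2)
    (ha : a = (2 * A - 2 * B + C + D) / 4)
    (hb : b = (-3 * A + 3 * B - 2 * C - D) / 3)
    (hc : c = C / 2)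
    (hd : d = A)
    (he : e = D / 12 - B / 2 + 7 * Δ + 5 * ε / (4 * Real.sqrt K1))
    (gbar g : ℝ → ℝ)
    (hgbar : ∀ z, gbar z = a * z ^ 4 + b * z ^ 3 + c * z ^ 2 + d * z + e)
    (hg : ∀ y, g y = gbar ((y - x1) / (x0 - x1))) :
    g x1 = e ∧
    g x0 = A / 2 + 7 * Δ + 5 * ε / (4 * Real.sqrt K1) ∧
    (∀ y ∈ Set.Icc x1 x0, Δ ≤ g y) ∧
    (∀ y ∈ Set.Icc x1 x0, |deriv (deriv g) y| ≤ K1 * Δ) :=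
  statement14_general Δ K1 ε η hΔ hK1 hε hcond2 hcond3 x1 x0 hx hgap A B C D a b c d e hA hB hC hD
    ha hb hc hd he gbar g hgbar hg
end
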